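/- arXiv:1503.06188 — 12 statements merged into one kernel-verified Lean document; each statement's English description precedes it below -/
import Mathlib

section
/- If an infinite permutation α (a linear order on ℕ) has an N-monotone subpermutation for some N ≥ 1 (i.e., there is a strictly increasing sequence of indices (n_i) with n_{i+1} - n_i ≤ N such that α[n_i] is strictly increasing, or strictly decreasing, in the order of α), then α is not equidistributed. -/
open Filter

/-- `a` is a representative of the infinite permutation (linear order on ℕ) `r`. -/
def Represents (a : ℕ → ℝ) (r : ℕ → ℕ → Prop) : Prop :=
  ∀ i j : ℕ, r i j ↔ a i < a j

/-- An equidistributed sequence of pairwise distinct reals in `[0,1]`. -/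
def EquidistSeq (a : ℕ → ℝ) : Prop :=
  (∀ n, a n ∈ Set.Icc (0:ℝ) 1) ∧ Function.Injective a ∧
    ∀ t ∈ Set.Icc (0:ℝ) 1,
      Tendsto (fun n => (((Finset.range n).filter fun i => a i < t).card : ℝ) / n)
        atTop (nhds t)

/-- An equidistributed infinite permutation. -/
def EquidistPerm (r : ℕ → ℕ → Prop) : Prop :=
  ∃ a : ℕ → ℝ, EquidistSeq a ∧ Represents a r

/-- `r` has an `N`-monotone subpermutation. -/
def HasNMonotone (r : ℕ → ℕ → Prop) (N : ℕ) : Prop :=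
  ∃ n : ℕ → ℕ, StrictMono n ∧ (∀ i, n (i+1) - n i ≤ N) ∧
    ((∀ i, r (n i) (n (i+1))) ∨ (∀ i, r (n (i+1)) (n i)))

/-- `r` is ultimately `t`-periodic. -/
def UltPeriodicPerm (r : ℕ → ℕ → Prop) (t : ℕ) : Prop :=
  ∃ n0 : ℕ, ∀ i ≥ n0, ∀ j ≥ n0, (r i j ↔ r (i+t) (j+t))

/-- `α[i]` is an `N`-maximal element of `r`. -/
def NMaximal (r : ℕ → ℕ → Prop) (N i : ℕ) : Prop :=
  N < i ∧ ∀ j, j ≠ i → i ≤ j + N → j ≤ i + N → r j i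

/-- `α[i]` is an `N`-minimal element of `r`. -/
def NMinimal (r : ℕ → ℕ → Prop) (N i : ℕ) : Prop :=
  N < i ∧ ∀ j, j ≠ i → i ≤ j + N → j ≤ i + N → r i j

/-- The factor (order type) of length `n` of `r` at position `m`. -/
def permFactor (r : ℕ → ℕ → Prop) (m n : ℕ) : Fin n → Fin n → Prop :=
  fun k l => r (m + (k : ℕ)) (m + (l : ℕ))

/-- The factor complexity of an infinite permutation. -/
noncomputable def permComplexity (r : ℕ → ℕ → Prop) (n : ℕ) : ℕ :=
  Set.ncard {f : Fin n → Fin n → Prop | ∃ m, f = permFactor r m n}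

open Classical in
/-- The underlying binary word of an infinite permutation. -/
noncomputable def underlying (r : ℕ → ℕ → Prop) : ℕ → ℕ :=
  fun i => if r i (i+1) then 0 else 1

/-- The factor of length `n` of the infinite word `w` at position `m`. -/
def factorAt (w : ℕ → ℕ) (m n : ℕ) : List ℕ :=
  (List.range n).map fun k => w (m + k)

/-- `u` is a factor of the infinite word `w`. -/
def IsFactor (w : ℕ → ℕ) (u : List ℕ) : Prop :=
  ∃ m, u = factorAt w m u.length

/-- The factor complexity of an infinite word. -/
noncomputable def wordComplexity (w : ℕ → ℕ) (n : ℕ) : ℕ :=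
  Set.ncard {u : List ℕ | ∃ m, u = factorAt w m n}

def LeftSpecial (w : ℕ → ℕ) (u : List ℕ) : Prop :=
  IsFactor w (0 :: u) ∧ IsFactor w (1 :: u)

def RightSpecial (w : ℕ → ℕ) (u : List ℕ) : Prop :=
  IsFactor w (u ++ [0]) ∧ IsFactor w (u ++ [1])

def Bispecial (w : ℕ → ℕ) (u : List ℕ) : Prop :=
  LeftSpecial w u ∧ RightSpecial w u

/-- A Christoffel word for `w`: `0b1` or `1b0` with `b` a bispecial factor of `w`. -/
def IsChristoffel (w : ℕ → ℕ) (u : List ℕ) : Prop :=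
  ∃ b, Bispecial w b ∧ (u = 0 :: (b ++ [1]) ∨ u = 1 :: (b ++ [0]))

/-- The Sturmian word `s_{σ,ρ}`. -/
noncomputable def sturmianWord (σ ρ : ℝ) : ℕ → ℕ :=
  fun k => if Int.fract (ρ + (k : ℝ) * σ) < 1 - σ then 0 else 1

/-- The word `w` is ultimately `p`-periodic. -/
def UltPeriodicWord (w : ℕ → ℕ) (p : ℕ) : Prop :=
  ∃ N : ℕ, ∀ i ≥ N, w (i + p) = w i

/-- The word defined by `s[k] = ⌊(k+1)σ⌋ − ⌊kσ⌋`. -/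
noncomputable def floorWord (σ : ℝ) : ℕ → ℕ :=
  fun k => (⌊((k : ℝ) + 1) * σ⌋ - ⌊(k : ℝ) * σ⌋).toNat


/-!
A monotone sequence in `[0, 1]` converges, so along the `N`-monotone subsequence the values
`a (n j)` eventually lie in an arbitrarily short interval `[s, t)`. As consecutive indices `n j`
are at most `N` apart, at least a proportion `1 / N` of all indices then lands in `[s, t)`,
whereas equidistribution gives that interval the asymptotic proportion `t - s`.
-/

open Finset Topology

noncomputable def countBelow (a : ℕ → ℝ) (t : ℝ) (m : ℕ) : ℕ := #{i ∈ range m | a i < t}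

section

variable {a : ℕ → ℝ} {n : ℕ → ℕ} {N : ℕ}

lemma StrictMono.pos_of_sub_le (hn : StrictMono n) (hgap : ∀ i, n (i + 1) - n i ≤ N) : 0 < N := by
  have := hn zero_lt_one
  have := hgap 0
  rw [zero_add] at *
  omega

lemma le_add_mul_of_sub_le (hgap : ∀ i, n (i + 1) - n i ≤ N) (i k : ℕ) :
    n (i + k) ≤ n i + N * k := by
  induction k with
  | zero => simp
  | succ k ih =>
    have := hgap (i + k)
    rw [← add_assoc, mul_add_one]
    omega

lemma countBelow_add_le (hn : StrictMono n) {s t : ℝ} {i₀ : ℕ}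
    (htail : ∀ j ≥ i₀, a (n j) ∈ Set.Ico s t) (k : ℕ) :
    countBelow a s (n (i₀ + k)) + k ≤ countBelow a t (n (i₀ + k)) := by
  have hst : s ≤ t := (htail i₀ le_rfl).1.trans (htail i₀ le_rfl).2.le
  set m := n (i₀ + k)
  have hcard : #((Ico i₀ (i₀ + k)).image n) = k := by
    rw [card_image_of_injective _ hn.injective, Nat.card_Ico, Nat.add_sub_cancel_left]
  have hdisj : Disjoint {i ∈ range m | a i < s} ((Ico i₀ (i₀ + k)).image n) := by
    rw [disjoint_left]
    intro _ hi hx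
    obtain ⟨j, hj, rfl⟩ := mem_image.1 hx
    exact (mem_filter.1 hi).2.not_ge (htail j (mem_Ico.1 hj).1).1
  have hsub :
      {i ∈ range m | a i < s} ∪ (Ico i₀ (i₀ + k)).image n ⊆ {i ∈ range m | a i < t} := by
    refine union_subset (monotone_filter_right _ fun _ _ h => h.trans_le hst) ?_
    intro _ hx
    obtain ⟨j, hj, rfl⟩ := mem_image.1 hx
    rw [mem_Ico] at hj
    exact mem_filter.2 ⟨mem_range.2 (hn hj.2), (htail j hj.1).2⟩
  unfold countBelow
  rw [← hcard, ← card_union_of_disjoint hdisj]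
  exact card_le_card hsub

lemma inv_le_sub_of_tail_mem_Ico (hn : StrictMono n) (hgap : ∀ i, n (i + 1) - n i ≤ N)
    {s t σ τ : ℝ}
    (hs : Tendsto (fun m => (countBelow a s m : ℝ) / m) atTop (𝓝 σ))
    (ht : Tendsto (fun m => (countBelow a t m : ℝ) / m) atTop (𝓝 τ))
    {i₀ : ℕ} (htail : ∀ j ≥ i₀, a (n j) ∈ Set.Ico s t) : (N : ℝ)⁻¹ ≤ τ - σ := by
  have hN : (N : ℝ) ≠ 0 := mod_cast (hn.pos_of_sub_le hgap).ne'
  set m := fun k => n (i₀ + k)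
  have hm : Tendsto m atTop atTop := (hn.comp fun _ _ h => by omega).tendsto_atTop
  have hlower := tendsto_add_mul_div_add_mul_atTop_nhds (0 : ℝ) (n i₀) 1 hN
  rw [one_div] at hlower
  have hupper : Tendsto (fun k => ((countBelow a t (m k) : ℝ) - countBelow a s (m k)) / m k)
      atTop (𝓝 (τ - σ)) := by
    simpa only [Function.comp_def, sub_div] using (ht.comp hm).sub (hs.comp hm)
  refine le_of_tendsto_of_tendsto hlower hupper ?_
  filter_upwards [eventually_ge_atTop 1] with k hk
  have hmk : (0 : ℝ) < m k := by
    have : i₀ + k ≤ m k := hn.le_apply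
    exact_mod_cast (by omega : 0 < m k)
  have hcount : (k : ℝ) ≤ (countBelow a t (m k) : ℝ) - countBelow a s (m k) := by
    have := countBelow_add_le hn htail k
    rw [le_sub_iff_add_le']
    exact_mod_cast this
  calc (0 + 1 * k : ℝ) / (n i₀ + N * k) ≤ k / m k := by
        rw [zero_add, one_mul]
        exact div_le_div_of_nonneg_left k.cast_nonneg hmk
          (mod_cast le_add_mul_of_sub_le hgap i₀ k)
    _ ≤ _ := div_le_div_of_nonneg_right hcount hmk.le

-- Lets the short interval around a limit point stick out of `[0, 1]`.
lemma tendsto_countBelow_div_projIcc (ha : ∀ i, a i ∈ Set.Icc (0 : ℝ) 1)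
    (hequi : ∀ t ∈ Set.Icc (0 : ℝ) 1,
      Tendsto (fun m => (countBelow a t m : ℝ) / m) atTop (𝓝 t)) (t : ℝ) :
    Tendsto (fun m => (countBelow a t m : ℝ) / m) atTop
      (𝓝 (Set.projIcc 0 1 zero_le_one t : ℝ)) := by
  rcases lt_or_ge t 0 with ht0 | ht0
  · have hzero : ∀ m, countBelow a t m = 0 := fun m =>
      card_eq_zero.2 <| filter_false_of_mem fun i _ => (ht0.trans_le (ha i).1).not_gt
    simp [hzero, Set.projIcc_of_le_left _ ht0.le]
  rcases le_or_gt t 1 with ht1 | ht1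
  · rw [Set.projIcc_of_mem _ ⟨ht0, ht1⟩]
    exact hequi t ⟨ht0, ht1⟩
  · have hall : ∀ m, countBelow a t m = m := fun m => by
      rw [countBelow, filter_true_of_mem fun i _ => (ha i).2.trans_lt ht1, card_range]
    rw [Set.projIcc_of_right_le _ ht1.le]
    refine tendsto_const_nhds.congr' ?_
    filter_upwards [eventually_ne_atTop 0] with m hm
    rw [hall, div_self (Nat.cast_ne_zero.2 hm)]

theorem not_tendsto_comp_of_bounded_gaps (ha : ∀ i, a i ∈ Set.Icc (0 : ℝ) 1)
    (hequi : ∀ t ∈ Set.Icc (0 : ℝ) 1,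
      Tendsto (fun m => (countBelow a t m : ℝ) / m) atTop (𝓝 t))
    (hn : StrictMono n) (hgap : ∀ i, n (i + 1) - n i ≤ N) (L : ℝ) :
    ¬ Tendsto (a ∘ n) atTop (𝓝 L) := by
  intro hL
  have hN : (0 : ℝ) < (N : ℝ)⁻¹ := inv_pos.2 (mod_cast hn.pos_of_sub_le hgap)
  obtain ⟨ε, hε, hεN⟩ : ∃ ε : ℝ, 0 < ε ∧ 2 * ε < (N : ℝ)⁻¹ :=
    ⟨(N : ℝ)⁻¹ / 4, by positivity, by linarith⟩
  have htail : ∀ᶠ j in atTop, a (n j) ∈ Set.Ico (L - ε) (L + ε) :=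
    (hL.eventually (Ioo_mem_nhds (by linarith) (by linarith))).mono
      fun _ h => Set.Ioo_subset_Ico_self h
  obtain ⟨i₀, hi₀⟩ := eventually_atTop.1 htail
  have hle := inv_le_sub_of_tail_mem_Ico hn hgap (tendsto_countBelow_div_projIcc ha hequi _)
    (tendsto_countBelow_div_projIcc ha hequi _) hi₀
  have hlip := (le_abs_self _).trans (Set.abs_projIcc_sub_projIcc zero_le_one
    (c := L + ε) (d := L - ε))
  rw [add_sub_sub_cancel, abs_of_pos (by linarith)] at hlip
  linarith

end

theorem stmt0_general (r : ℕ → ℕ → Prop) (N : ℕ)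
    (hmon : HasNMonotone r N) : ¬ EquidistPerm r := by
  rintro ⟨a, ⟨ha, -, hequi⟩, hrep⟩
  obtain ⟨n, hn, hgap, hinc | hdec⟩ := hmon
  · have hmono : StrictMono (a ∘ n) := strictMono_nat_of_lt_succ fun i => (hrep _ _).1 (hinc i)
    have hbdd : BddAbove (Set.range (a ∘ n)) := ⟨1, Set.forall_mem_range.2 fun i => (ha _).2⟩
    exact not_tendsto_comp_of_bounded_gaps ha hequi hn hgap _
      (tendsto_atTop_ciSup hmono.monotone hbdd)
  · have hanti : StrictAnti (a ∘ n) := strictAnti_nat_of_succ_lt fun i => (hrep _ _).1 (hdec i)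
    have hbdd : BddBelow (Set.range (a ∘ n)) := ⟨0, Set.forall_mem_range.2 fun i => (ha _).1⟩
    exact not_tendsto_comp_of_bounded_gaps ha hequi hn hgap _
      (tendsto_atTop_ciInf hanti.antitone hbdd)

theorem stmt0 (r : ℕ → ℕ → Prop) (N : ℕ) (hN : 1 ≤ N)
    (hmon : HasNMonotone r N) : ¬ EquidistPerm r :=
  stmt0_general r N hmon
end

section
/- An ultimately t-periodic infinite permutation contains a t-monotone subpermutation; specifically, the subsequence of elements at indices that are multiples of t (beyond the preperiod) is eventually monotone with consecutive index gaps equal to t. -/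
open Filter

/-
Past the preperiod `n₀`, shifting both arguments by `t` does not change the comparison, so all
the comparisons `α[kt] ≺ α[(k+1)t]` with `k ≥ n₀` are shifts of the single one at `k = n₀`: they
all go the same way. Hence `n₀t < (n₀+1)t < ⋯` is a monotone subpermutation with gaps exactly `t`.
-/

theorem iff_add_mul_of_iff_add {r : ℕ → ℕ → Prop} {t n₀ : ℕ}
    (hper : ∀ i ≥ n₀, ∀ j ≥ n₀, (r i j ↔ r (i + t) (j + t))) {i j : ℕ} (hi : n₀ ≤ i)
    (hj : n₀ ≤ j) (m : ℕ) : r i j ↔ r (i + m * t) (j + m * t) := by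
  induction m with
  | zero => simp
  | succ m ih =>
    rw [ih, hper _ (by omega) _ (by omega), Nat.succ_mul, ← add_assoc, ← add_assoc]

theorem UltPeriodicPerm.exists_forall_ge_iff_stride {r : ℕ → ℕ → Prop} {t : ℕ} (ht : 1 ≤ t)
    (hper : UltPeriodicPerm r t) :
    ∃ m₀, ∀ k ≥ m₀, (r (k * t) ((k + 1) * t) ↔ r (m₀ * t) ((m₀ + 1) * t)) := by
  obtain ⟨n₀, hn₀⟩ := hper
  have hle : n₀ ≤ n₀ * t := Nat.le_mul_of_pos_right n₀ ht
  refine ⟨n₀, fun k hk => ?_⟩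
  obtain ⟨d, rfl⟩ := Nat.exists_eq_add_of_le hk
  rw [iff_add_mul_of_iff_add hn₀ hle (by nlinarith) d]
  constructor <;> intro h <;> convert h using 2 <;> ring

theorem forall_ge_or_forall_ge_of_iff {α : Type*} {r : α → α → Prop} [Std.Trichotomous r]
    {a : ℕ → α} {m₀ : ℕ} (hne : ∀ k, a k ≠ a (k + 1))
    (h : ∀ k ≥ m₀, (r (a k) (a (k + 1)) ↔ r (a m₀) (a (m₀ + 1)))) :
    (∀ k ≥ m₀, r (a k) (a (k + 1))) ∨ ∀ k ≥ m₀, r (a (k + 1)) (a k) := by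
  by_cases h₀ : r (a m₀) (a (m₀ + 1))
  · exact .inl fun k hk => (h k hk).2 h₀
  · refine .inr fun k hk => ?_
    rcases trichotomous_of r (a k) (a (k + 1)) with hlt | heq | hgt
    · exact absurd ((h k hk).1 hlt) h₀
    · exact absurd heq (hne k)
    · exact hgt

theorem hasNMonotone_of_forall_ge {r : ℕ → ℕ → Prop} {t m₀ : ℕ} (ht : 1 ≤ t)
    (hmono : (∀ k ≥ m₀, r (k * t) ((k + 1) * t)) ∨ ∀ k ≥ m₀, r ((k + 1) * t) (k * t)) :
    HasNMonotone r t := by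
  refine ⟨fun i => (m₀ + i) * t, fun i j hij => ?_, fun i => ?_, ?_⟩
  · exact Nat.mul_lt_mul_of_pos_right (by omega) ht
  · simp only [Nat.add_succ, Nat.succ_mul, Nat.add_sub_cancel_left, le_refl]
  · rcases hmono with hup | hdown
    · exact .inl fun i => hup (m₀ + i) (Nat.le_add_right _ _)
    · exact .inr fun i => hdown (m₀ + i) (Nat.le_add_right _ _)

theorem stmt2 (r : ℕ → ℕ → Prop) [IsStrictTotalOrder ℕ r] (t : ℕ) (ht : 1 ≤ t)
    (hper : UltPeriodicPerm r t) :
    HasNMonotone r t ∧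
      ∃ m0 : ℕ, (∀ k ≥ m0, r (k * t) ((k + 1) * t)) ∨
        (∀ k ≥ m0, r ((k + 1) * t) (k * t)) := by
  obtain ⟨m₀, hstride⟩ := hper.exists_forall_ge_iff_stride ht
  have hne : ∀ k, k * t ≠ (k + 1) * t := fun k =>
    (Nat.mul_lt_mul_of_pos_right (Nat.lt_succ_self k) ht).ne
  have hmono := forall_ge_or_forall_ge_of_iff (r := r) (a := fun k => k * t) hne hstride
  exact ⟨hasNMonotone_of_forall_ge ht hmono, m₀, hmono⟩
end

section
/- In an equidistributed infinite permutation α, for each N ≥ 1 there exists an N-maximal element, i.e., an index i > N such that α[i] ≻ α[j] for all j with 0 < |i - j| ≤ N. Symmetrically, there exists an N-minimal element. -/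
open Filter

/-!
If no element is `N`-minimal, every index `i > 2N` with `a i < c` has a neighbour within distance
`N` with a smaller value, and that neighbour again lies beyond `2N` with value below `c` as long as
`c` is smaller than the values at `N < i ≤ 2N`. Applied to the minimum of `a` over
`{i ≤ m | 2N < i, a i < c}`, this puts an element of `{a < c}` in every window `(m, m + N]` past
the first one, so this set has density at least `1 / N`. Equidistribution gives it density `c`,
and `c < 1 / N` can be chosen (an index `i > N` with `a i = 0` is `N`-minimal outright). Maximal
elements are minimal elements of the reversed permutation, represented by the equidistributed
sequence `1 - a`.
-/

open Finset

section Windows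

variable {β : Type*} [LinearOrder β]

theorem exists_between_forall_lt {ι : Type*} [DenselyOrdered β] (s : Finset ι) (f : ι → β)
    {b x : β} (hbx : b < x) (hf : ∀ i ∈ s, b < f i) : ∃ c, b < c ∧ c < x ∧ ∀ i ∈ s, c < f i := by
  classical
  set m := (insert x (s.image f)).min' (insert_nonempty _ _)
  have hbm : b < m := by
    simpa [m, lt_min'_iff] using ⟨hbx, hf⟩
  obtain ⟨c, hbc, hcm⟩ := exists_between hbm
  exact ⟨c, hbc, hcm.trans_le (min'_le _ _ (mem_insert_self _ _)),
    fun i hi => hcm.trans_le (min'_le _ _ (mem_insert_of_mem (mem_image_of_mem f hi)))⟩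

theorem exists_mem_Ioc_of_forall_exists_lt (a : ℕ → β) {p : ℕ → Prop} {N : ℕ}
    (hp : ∀ i, p i → ∃ j, p j ∧ a j < a i ∧ j ≤ i + N) {i m : ℕ} (hi : p i) (him : i ≤ m) :
    ∃ j, p j ∧ m < j ∧ j ≤ m + N := by
  classical
  obtain ⟨k, hk, hmin⟩ := ((range (m + 1)).filter p).exists_min_image a
    ⟨i, mem_filter.2 ⟨mem_range.2 (by omega), hi⟩⟩
  rw [mem_filter, mem_range] at hk
  obtain ⟨j, hj, hjk, hjN⟩ := hp k hk.2
  refine ⟨j, hj, ?_, by omega⟩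
  by_contra! hjm
  exact (hmin j (mem_filter.2 ⟨mem_range.2 (by omega), hj⟩)).not_gt hjk

theorem le_card_filter_of_forall_exists_mem_Ioc {p : ℕ → Prop} [DecidablePred p] {N i₀ : ℕ}
    (hi₀ : p i₀) (hp : ∀ m, i₀ ≤ m → ∃ j, p j ∧ m < j ∧ j ≤ m + N) (k : ℕ) :
    k + 1 ≤ #{i ∈ range (i₀ + k * N + 1) | p i} := by
  induction k with
  | zero => exact card_pos.2 ⟨i₀, by simp [hi₀]⟩
  | succ k ih =>
    obtain ⟨j, hj, hlt, hle⟩ := hp (i₀ + k * N) (by omega)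
    rw [add_one_mul]
    have hsub : insert j {i ∈ range (i₀ + k * N + 1) | p i} ⊆
        {i ∈ range (i₀ + (k * N + N) + 1) | p i} := by
      intro i
      simp only [mem_insert, mem_filter, mem_range]
      rintro (rfl | ⟨hi, hpi⟩)
      · exact ⟨by omega, hj⟩
      · exact ⟨by omega, hpi⟩
    calc k + 1 + 1 ≤ #(insert j {i ∈ range (i₀ + k * N + 1) | p i}) := by
          rw [card_insert_of_notMem (by simp only [mem_filter, mem_range]; omega)]
          omega
      _ ≤ _ := card_le_card hsub

theorem card_filter_lt_add_card_filter_gt_le (a : ℕ → β) (s : β) (n : ℕ) :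
    #{i ∈ range n | a i < s} + #{i ∈ range n | s < a i} ≤ n := by
  rw [← card_union_of_disjoint (disjoint_filter.2 fun _ _ h₁ h₂ => lt_asymm h₁ h₂)]
  exact (card_le_card (union_subset (filter_subset _ _) (filter_subset _ _))).trans_eq
    (card_range n)

theorem le_card_filter_lt_add_card_filter_gt {a : ℕ → β} (ha : Function.Injective a) (s : β)
    (n : ℕ) : n ≤ #{i ∈ range n | a i < s} + #{i ∈ range n | s < a i} + 1 := by
  have hcover : range n ⊆
      {i ∈ range n | a i < s} ∪ {i ∈ range n | s < a i} ∪ {i ∈ range n | a i = s} := by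
    intro i hi
    simp only [mem_union, mem_filter, hi, true_and]
    rcases lt_trichotomy (a i) s with h | h | h <;> simp [h]
  have hfiber : #{i ∈ range n | a i = s} ≤ 1 :=
    card_le_one.2 fun i hi j hj => ha ((mem_filter.1 hi).2.trans (mem_filter.1 hj).2.symm)
  calc n = #(range n) := (card_range n).symm
    _ ≤ _ := card_le_card hcover
    _ ≤ _ := (card_union_le _ _).trans (add_le_add (card_union_le _ _) hfiber)

end Windows

theorem Represents.one_sub {a : ℕ → ℝ} {r : ℕ → ℕ → Prop} (hr : Represents a r) :
    Represents (fun n => 1 - a n) (flip r) :=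
  fun i j => (hr j i).trans (sub_lt_sub_iff_left 1).symm

theorem Represents.exists_lt_of_not_nMinimal {a : ℕ → ℝ} {r : ℕ → ℕ → Prop}
    (hr : Represents a r) (ha : Function.Injective a) {N i : ℕ} (hi : N < i)
    (h : ¬ NMinimal r N i) : ∃ j, a j < a i ∧ i ≤ j + N ∧ j ≤ i + N := by
  simp only [NMinimal, hi, true_and, not_forall] at h
  obtain ⟨j, hji, h₁, h₂, hij⟩ := h
  exact ⟨j, lt_of_le_of_ne (not_lt.1 (hij ∘ (hr i j).2)) (ha.ne hji), h₁, h₂⟩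

namespace EquidistSeq

variable {a : ℕ → ℝ}

theorem one_sub (ha : EquidistSeq a) : EquidistSeq (fun n => 1 - a n) := by
  obtain ⟨hmem, hinj, hdist⟩ := ha
  refine ⟨fun n => ⟨by linarith [(hmem n).2], by linarith [(hmem n).1]⟩,
    fun i j h => hinj (by simpa using h), fun t ht => ?_⟩
  have hA := (tendsto_const_nhds (x := (1 : ℝ))).sub
    (hdist (1 - t) ⟨by linarith [ht.2], by linarith [ht.1]⟩)
  rw [sub_sub_cancel] at hA
  have hflip : ∀ n, {i ∈ range n | 1 - a i < t} = {i ∈ range n | 1 - t < a i} := fun n =>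
    filter_congr fun i _ => by constructor <;> intro <;> linarith
  simp only [hflip]
  have hA' := hA.sub tendsto_one_div_atTop_nhds_zero_nat
  rw [sub_zero] at hA'
  refine tendsto_of_tendsto_of_tendsto_of_le_of_le' hA' hA ?_ ?_ <;>
    filter_upwards [eventually_gt_atTop 0] with n hn
  · have := le_card_filter_lt_add_card_filter_gt hinj (1 - t) n
    rw [sub_sub, ← add_div, sub_le_iff_le_add, ← add_div, le_div_iff₀ (by positivity), one_mul]
    exact_mod_cast (by omega : n ≤ _)
  · have := card_filter_lt_add_card_filter_gt_le a (1 - t) n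
    rw [le_sub_iff_add_le, ← add_div, div_le_one (by positivity)]
    exact_mod_cast (by omega : _ ≤ n)

theorem frequently_lt (ha : EquidistSeq a) {c : ℝ} (hc₀ : 0 < c) (hc₁ : c ≤ 1) :
    ∃ᶠ i in atTop, a i < c := by
  rw [frequently_atTop]
  by_contra! h
  obtain ⟨m, hm⟩ := h
  have hbound : ∀ n : ℕ, (#{i ∈ range n | a i < c} : ℝ) / n ≤ m / n := fun n => by
    gcongr
    refine (card_le_card fun i hi => mem_range.2 ?_).trans_eq (card_range m)
    by_contra! him
    exact (hm i him).not_gt (mem_filter.1 hi).2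
  linarith [le_of_tendsto_of_tendsto' (ha.2.2 c ⟨hc₀.le, hc₁⟩)
    (tendsto_const_div_atTop_nhds_zero_nat (m : ℝ)) hbound]

theorem one_div_le_of_le_card_filter (ha : EquidistSeq a) {c : ℝ} (hc : c ∈ Set.Icc 0 1)
    {N i₀ : ℕ} (hN : 1 ≤ N) (h : ∀ k, k + 1 ≤ #{i ∈ range (i₀ + k * N + 1) | a i < c}) :
    1 / (N : ℝ) ≤ c := by
  have hlen : Tendsto (fun k => i₀ + k * N + 1) atTop atTop :=
    tendsto_atTop_mono (fun k => show k ≤ _ by nlinarith) tendsto_id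
  refine le_of_tendsto_of_tendsto' (tendsto_add_mul_div_add_mul_atTop_nhds 1 (i₀ + 1 : ℝ) 1
    (by positivity : (N : ℝ) ≠ 0)) ((ha.2.2 c hc).comp hlen) fun k => ?_
  have hk : (1 : ℝ) + 1 * k ≤ #{i ∈ range (i₀ + k * N + 1) | a i < c} := by
    exact_mod_cast (by simpa [add_comm] using h k)
  simp only [Function.comp_apply]
  rw [show ((i₀ : ℝ) + 1 + N * k) = ((i₀ + k * N + 1 : ℕ) : ℝ) by push_cast; ring]
  gcongr

theorem exists_nMinimal (ha : EquidistSeq a) {r : ℕ → ℕ → Prop} (hr : Represents a r) {N : ℕ}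
    (hN : 1 ≤ N) : ∃ i, NMinimal r N i := by
  by_cases hzero : ∃ i, N < i ∧ a i = 0
  · obtain ⟨i, hi, hai⟩ := hzero
    exact ⟨i, hi, fun j hji _ _ => (hr i j).2 <|
      hai ▸ lt_of_le_of_ne (ha.1 j).1 (hai ▸ ha.2.1.ne hji.symm)⟩
  push Not at hzero
  have hNinv : 1 / (N : ℝ) ≤ 1 := by
    rw [div_le_one (by positivity)]; exact_mod_cast hN
  obtain ⟨c, hc₀, hcN, hc⟩ := exists_between_forall_lt (Ioc N (2 * N)) a
    (by positivity : (0 : ℝ) < 1 / N)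
    fun i hi => lt_of_le_of_ne (ha.1 i).1 (hzero i (mem_Ioc.1 hi).1).symm
  obtain ⟨i₀, hi₀, hai₀⟩ := (ha.frequently_lt hc₀ (hcN.le.trans hNinv)).forall_exists_of_atTop
    (2 * N + 1)
  by_contra hno
  have hstep : ∀ i, (2 * N < i ∧ a i < c) → ∃ j, (2 * N < j ∧ a j < c) ∧ a j < a i ∧ j ≤ i + N := by
    rintro i ⟨hi, hic⟩
    obtain ⟨j, hji, h₁, h₂⟩ :=
      hr.exists_lt_of_not_nMinimal ha.2.1 (by omega) fun h => hno ⟨i, h⟩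
    have hj : 2 * N < j := by
      by_contra! hj
      exact (hc j (mem_Ioc.2 ⟨by omega, hj⟩)).not_gt (hji.trans hic)
    exact ⟨j, ⟨hj, hji.trans hic⟩, hji, h₂⟩
  have hcount (k : ℕ) : k + 1 ≤ #{i ∈ range (i₀ + k * N + 1) | a i < c} :=
    (le_card_filter_of_forall_exists_mem_Ioc ⟨by omega, hai₀⟩
      (fun _ hm => exists_mem_Ioc_of_forall_exists_lt a hstep ⟨by omega, hai₀⟩ hm) k).trans
      (card_le_card (monotone_filter_right _ fun _ _ hi => hi.2))
  exact (ha.one_div_le_of_le_card_filter ⟨hc₀.le, hcN.le.trans hNinv⟩ hN hcount).not_gt hcN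

end EquidistSeq

theorem stmt3 (r : ℕ → ℕ → Prop) (h : EquidistPerm r) (N : ℕ) (hN : 1 ≤ N) :
    (∃ i, NMaximal r N i) ∧ (∃ i, NMinimal r N i) := by
  obtain ⟨a, ha, hr⟩ := h
  exact ⟨ha.one_sub.exists_nMinimal hr.one_sub hN, ha.exists_nMinimal hr hN⟩
end

section
/- If an infinite permutation α has no N-maximal element, then α has an N-monotone subpermutation (either an N-growing or an N-decreasing one). -/
open Filter

/-!
If every suffix `[c, ∞)` of `ℕ` has a `≺`-greatest element, the successive suffix maxima
`m₀ = max [0, ∞)`, `mₖ₊₁ = max [mₖ + 1, ∞)` decrease, and a gap `mₖ₊₁ - mₖ > N` would make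
`mₖ₊₁` an `N`-maximal element. Otherwise some suffix `[c, ∞)` has no greatest element; inside
it, an element with no larger one within distance `N` lies in `[c, c + N]` (else it is
`N`-maximal), so there is at most one such dead end, and a walk started above it can always
step to a larger element of the suffix at distance at most `N`. The walk is injective, hence
tends to infinity, and its successive record positions form an `N`-growing subpermutation.
-/

open Function

def HasNGrowing (r : ℕ → ℕ → Prop) (N : ℕ) : Prop :=
  ∃ n : ℕ → ℕ, StrictMono n ∧ (∀ i, n (i + 1) - n i ≤ N) ∧ ∀ i, r (n i) (n (i + 1))

lemma hasNMonotone_iff (r : ℕ → ℕ → Prop) (N : ℕ) :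
    HasNMonotone r N ↔ HasNGrowing r N ∨ HasNGrowing (swap r) N := by
  simp only [HasNMonotone, HasNGrowing, swap, ← exists_or, and_or_left]

lemma exists_strictMono_subseq_of_step_le {N : ℕ} {w : ℕ → ℕ} (hw : Tendsto w atTop atTop)
    (hstep : ∀ k, w (k + 1) ≤ w k + N) :
    ∃ t : ℕ → ℕ, StrictMono t ∧ StrictMono (w ∘ t) ∧ ∀ j, w (t (j + 1)) ≤ w (t j) + N := by
  classical
  have hnext : ∀ i, ∃ k, i < k ∧ w i < w k := fun i =>
    ((eventually_gt_atTop i).and (hw.eventually_gt_atTop (w i))).exists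
  let next i := Nat.find (hnext i)
  have hlt (i : ℕ) : i < next i ∧ w i < w (next i) := Nat.find_spec (hnext i)
  -- `next i - 1` is not a record beyond `i`, and one step adds at most `N`.
  have hle (i : ℕ) : w (next i) ≤ w i + N := by
    have hprev : w (next i - 1) ≤ w i := by
      rcases (Nat.le_sub_one_of_lt (hlt i).1).eq_or_lt with h | h
      · rw [← h]
      · exact not_lt.1 fun h' => Nat.find_min (hnext i) (Nat.sub_one_lt_of_lt (hlt i).1) ⟨h, h'⟩
    calc w (next i) = w (next i - 1 + 1) := by rw [Nat.sub_add_cancel (Nat.one_le_of_lt (hlt i).1)]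
      _ ≤ w (next i - 1) + N := hstep _
      _ ≤ w i + N := by omega
  refine ⟨fun j => next^[j] 0, strictMono_nat_of_lt_succ fun j => ?_,
    strictMono_nat_of_lt_succ fun j => ?_, fun j => ?_⟩ <;>
    simp only [comp_apply, iterate_succ_apply']
  exacts [(hlt _).1, (hlt _).2, hle _]

lemma hasNGrowing_of_walk {s : ℕ → ℕ → Prop} [IsStrictOrder ℕ s] {N : ℕ} {w : ℕ → ℕ}
    (hs : ∀ k, s (w k) (w (k + 1))) (hstep : ∀ k, w (k + 1) ≤ w k + N) : HasNGrowing s N := by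
  obtain ⟨t, ht, hwt, hgap⟩ := exists_strictMono_subseq_of_step_le
    (RelEmbedding.natLT w hs).injective.nat_tendsto_atTop hstep
  exact ⟨w ∘ t, hwt, fun j => Nat.sub_le_iff_le_add'.2 (hgap j),
    fun j => Nat.rel_of_forall_rel_succ_of_lt s hs (ht j.lt_succ_self)⟩

lemma hasNGrowing_of_forall_exists_step {s : ℕ → ℕ → Prop} [IsStrictOrder ℕ s] {N : ℕ}
    {P : ℕ → Prop} {x : ℕ} (hx : P x) (hstep : ∀ x, P x → ∃ y, P y ∧ s x y ∧ y ≤ x + N) :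
    HasNGrowing s N := by
  choose! f hfP hfs hfN using hstep
  have hP (k : ℕ) : P (f^[k] x) := by
    induction k with
    | zero => exact hx
    | succ k ih => rw [iterate_succ_apply']; exact hfP _ ih
  refine hasNGrowing_of_walk (w := fun k => f^[k] x) (fun k => ?_) (fun k => ?_) <;>
    simp only [iterate_succ_apply']
  exacts [hfs _ (hP k), hfN _ (hP k)]

section LocalMax

variable {r : ℕ → ℕ → Prop} {N : ℕ}

def IsSuffixMax (r : ℕ → ℕ → Prop) (c m : ℕ) : Prop :=
  c ≤ m ∧ ∀ j, c ≤ j → j ≠ m → r j m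

def IsLocalMaxFrom (r : ℕ → ℕ → Prop) (N c i : ℕ) : Prop :=
  c ≤ i ∧ ∀ j, c ≤ j → j ≠ i → i ≤ j + N → j ≤ i + N → r j i

lemma IsLocalMaxFrom.nMaximal {c i : ℕ} (h : IsLocalMaxFrom r N c i) (hi : c + N ≤ i)
    (hN : N < i) : NMaximal r N i :=
  ⟨hN, fun j hne hij hji => h.2 j (by omega) hne hij hji⟩

lemma IsLocalMaxFrom.eq [IsStrictOrder ℕ r] {c d d' : ℕ} (h : IsLocalMaxFrom r N c d)
    (h' : IsLocalMaxFrom r N c d') (hd : d ≤ c + N) (hd' : d' ≤ c + N) : d = d' := by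
  obtain ⟨hcd, hd_max⟩ := h
  obtain ⟨hcd', hd'_max⟩ := h'
  by_contra hne
  exact asymm (hd_max d' hcd' (Ne.symm hne) (by omega) (by omega))
    (hd'_max d hcd hne (by omega) (by omega))

lemma exists_step_of_not_isLocalMaxFrom [IsStrictTotalOrder ℕ r] {c x : ℕ} (hx : c ≤ x)
    (h : ¬ IsLocalMaxFrom r N c x) : ∃ y, c ≤ y ∧ r x y ∧ y ≤ x + N := by
  simp only [IsLocalMaxFrom, hx, true_and, not_forall] at h
  obtain ⟨y, hy, hne, -, hyx, hr⟩ := h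
  exact ⟨y, hy, by_contra fun h' => hne (Std.Trichotomous.trichotomous y x hr h'), hyx⟩

lemma hasNGrowing_swap_of_forall_isSuffixMax [IsStrictOrder ℕ r]
    (h : ¬ ∃ i, NMaximal r N i) (hmax : ∀ c, ∃ m, IsSuffixMax r c m) :
    HasNGrowing (swap r) N := by
  choose top htop using hmax
  refine hasNGrowing_of_forall_exists_step (P := fun x => ∃ c, IsSuffixMax r c x)
    ⟨0, htop 0⟩ fun x ⟨c, hcx, hx⟩ => ?_
  obtain ⟨hle, hgt⟩ := htop (x + 1)
  refine ⟨top (x + 1), ⟨x + 1, hle, hgt⟩, hx _ (by omega) (by omega), not_lt.1 fun hgap => ?_⟩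
  exact h ⟨_, IsLocalMaxFrom.nMaximal ⟨hle, fun j hj hne _ _ => hgt j hj hne⟩ (by omega) (by omega)⟩

lemma hasNGrowing_of_not_isSuffixMax [IsStrictTotalOrder ℕ r]
    (h : ¬ ∃ i, NMaximal r N i) {c : ℕ} (hc : ¬ ∃ m, IsSuffixMax r c m) : HasNGrowing r N := by
  have hdead_le {d : ℕ} (hd : IsLocalMaxFrom r N c d) : d ≤ c + N :=
    not_lt.1 fun hgt => h ⟨d, hd.nMaximal hgt.le (by omega)⟩
  let P x := c ≤ x ∧ ∀ d, IsLocalMaxFrom r N c d → r d x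
  have hstart : ∃ x, P x := by
    by_cases hdead : ∃ d, IsLocalMaxFrom r N c d
    · obtain ⟨d, hd⟩ := hdead
      have hup := not_exists.1 hc d
      simp only [IsSuffixMax, hd.1, true_and, not_forall] at hup
      obtain ⟨x, hx, hne, hr⟩ := hup
      refine ⟨x, hx, fun d' hd' => ?_⟩
      rw [hd'.eq hd (hdead_le hd') (hdead_le hd)]
      by_contra h'
      exact hne (Std.Trichotomous.trichotomous x d hr h')
    · exact ⟨c, le_rfl, fun d hd => (hdead ⟨d, hd⟩).elim⟩
  obtain ⟨x₀, hx₀⟩ := hstart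
  refine hasNGrowing_of_forall_exists_step hx₀ fun x hx => ?_
  obtain ⟨y, hy, hxy, hyx⟩ := exists_step_of_not_isLocalMaxFrom hx.1
    fun hdead => irrefl x (hx.2 x hdead)
  exact ⟨y, ⟨hy, fun d hd => _root_.trans (hx.2 d hd) hxy⟩, hxy, hyx⟩

end LocalMax

theorem stmt4 (r : ℕ → ℕ → Prop) [IsStrictTotalOrder ℕ r] (N : ℕ)
    (h : ¬ ∃ i, NMaximal r N i) : HasNMonotone r N := by
  rw [hasNMonotone_iff]
  by_cases hmax : ∀ c, ∃ m, IsSuffixMax r c m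
  · exact Or.inr (hasNGrowing_swap_of_forall_isSuffixMax h hmax)
  · obtain ⟨c, hc⟩ := not_forall.1 hmax
    exact Or.inl (hasNGrowing_of_not_isSuffixMax h hc)
end

section
/- For any equidistributed infinite permutation α, the factor complexity satisfies p_α(n) ≥ n for all n ≥ 1. -/
open Filter

/-!
If `p(k+1) ≤ k ≤ p(k)`, every factor of length `k` extends uniquely to one of length `k+1`, so
by pigeonhole the factors of length `k+1` are eventually periodic with some period `1 ≤ t ≤ k`.
Comparing the first and the `t`-th entries of these factors shows that the comparison of
`α[i]` and `α[i+t]` is eventually constant along every residue class mod `t`. In a representative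
in `[0,1]` each residue class is then eventually monotone, hence convergent; finitely many limits
leave a whole interval `[u,v] ⊆ (0,1)` that the sequence eventually avoids, so its empirical
distribution function has the same limit at `u` and at `v`, contradicting equidistribution.
-/

open Filter Topology Finset

section Factors

variable (r : ℕ → ℕ → Prop)

def permFactors (n : ℕ) : Set (Fin n → Fin n → Prop) :=
  {f | ∃ m, f = permFactor r m n}

theorem permComplexity_eq_ncard (n : ℕ) : permComplexity r n = (permFactors r n).ncard := rfl

theorem permFactors_finite (n : ℕ) : (permFactors r n).Finite := Set.toFinite _

theorem permFactors_eq_image_castSucc (k : ℕ) :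
    permFactors r k =
      (fun g i j => g (Fin.castSucc i) (Fin.castSucc j)) '' permFactors r (k + 1) := by
  ext f
  constructor
  · rintro ⟨m, rfl⟩
    exact ⟨_, ⟨m, rfl⟩, rfl⟩
  · rintro ⟨_, ⟨m, rfl⟩, rfl⟩
    exact ⟨m, rfl⟩

theorem permComplexity_le_succ (k : ℕ) : permComplexity r k ≤ permComplexity r (k + 1) := by
  rw [permComplexity_eq_ncard, permFactors_eq_image_castSucc]
  exact Set.ncard_image_le (permFactors_finite r _)

variable {r} {k : ℕ}

theorem permFactor_succ_eq_of_complexity_le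
    (hk : permComplexity r (k + 1) ≤ permComplexity r k) {m m' : ℕ}
    (h : permFactor r m k = permFactor r m' k) :
    permFactor r m (k + 1) = permFactor r m' (k + 1) := by
  have hinj : Set.InjOn (fun g (i j : Fin k) => g (Fin.castSucc i) (Fin.castSucc j))
      (permFactors r (k + 1)) := by
    refine Set.injOn_of_ncard_image_eq
      (le_antisymm (Set.ncard_image_le (permFactors_finite r _)) ?_) (permFactors_finite r _)
    rwa [← permFactors_eq_image_castSucc, ← permComplexity_eq_ncard,
      ← permComplexity_eq_ncard]
  exact hinj ⟨m, rfl⟩ ⟨m', rfl⟩ h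

theorem permFactor_add_one_eq_of_complexity_le
    (hk : permComplexity r (k + 1) ≤ permComplexity r k) {m m' : ℕ}
    (h : permFactor r m (k + 1) = permFactor r m' (k + 1)) :
    permFactor r (m + 1) (k + 1) = permFactor r (m' + 1) (k + 1) := by
  refine permFactor_succ_eq_of_complexity_le hk (funext₂ fun i j => ?_)
  have hij := congrFun₂ h i.succ j.succ
  simp only [permFactor, Fin.val_succ] at hij ⊢
  convert hij using 2 <;> ring

theorem permFactor_periodic_of_complexity_le
    (hk : permComplexity r (k + 1) ≤ permComplexity r k) {m₀ t : ℕ}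
    (h : permFactor r m₀ (k + 1) = permFactor r (m₀ + t) (k + 1)) :
    ∀ i ≥ m₀, permFactor r i (k + 1) = permFactor r (i + t) (k + 1) := by
  intro i hi
  induction i, hi using Nat.le_induction with
  | base => exact h
  | succ i _ ih => simpa only [Nat.add_right_comm i 1 t] using
      permFactor_add_one_eq_of_complexity_le hk ih

theorem exists_permFactor_eq_permFactor_add (hk : permComplexity r (k + 1) ≤ k) :
    ∃ m t, 0 < t ∧ t ≤ k ∧ permFactor r m (k + 1) = permFactor r (m + t) (k + 1) := by
  have hfin := permFactors_finite r (k + 1)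
  obtain ⟨x, hx, y, hy, hxy, hfxy⟩ := exists_ne_map_eq_of_card_lt_of_maps_to
    (s := range (k + 1)) (t := hfin.toFinset) (f := fun m => permFactor r m (k + 1))
    (by rwa [← Set.ncard_eq_toFinset_card _ hfin, card_range, Nat.lt_succ_iff])
    (fun m _ => hfin.mem_toFinset.2 ⟨m, rfl⟩)
  rw [mem_range] at hx hy
  rcases hxy.lt_or_gt with hlt | hlt
  · exact ⟨x, y - x, by omega, by omega, by rwa [Nat.add_sub_cancel' hlt.le]⟩
  · exact ⟨y, x - y, by omega, by omega, by rw [Nat.add_sub_cancel' hlt.le, hfxy]⟩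

theorem exists_comparison_periodic_of_complexity_le (hk : permComplexity r (k + 1) ≤ k)
    (hk' : permComplexity r (k + 1) ≤ permComplexity r k) :
    ∃ m₀ t, 0 < t ∧ ∀ i ≥ m₀, (r i (i + t) ↔ r (i + t) (i + t + t)) := by
  obtain ⟨m₀, t, ht, htk, h⟩ := exists_permFactor_eq_permFactor_add hk
  refine ⟨m₀, t, ht, fun i hi => ?_⟩
  have h0t := congrFun₂ (permFactor_periodic_of_complexity_le hk' h i hi)
    ⟨0, by omega⟩ ⟨t, by omega⟩
  simp only [permFactor, add_zero] at h0t
  exact h0t.to_iff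

end Factors

theorem exists_tendsto_of_lt_succ_iff {u : ℕ → ℝ}
    (hu : ∀ j, u j < u (j + 1) ↔ u (j + 1) < u (j + 2))
    (hbddBelow : BddBelow (Set.range u)) (hbddAbove : BddAbove (Set.range u)) :
    ∃ L, Tendsto u atTop (𝓝 L) := by
  have hconst : ∀ j, u j < u (j + 1) ↔ u 0 < u 1 := by
    intro j
    induction j with
    | zero => rfl
    | succ j ih => exact (hu j).symm.trans ih
  by_cases h01 : u 0 < u 1
  · exact ⟨_, tendsto_atTop_ciSup
      (monotone_nat_of_le_succ fun j => ((hconst j).2 h01).le) hbddAbove⟩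
  · exact ⟨_, tendsto_atTop_ciInf
      (antitone_nat_of_succ_le fun j => not_lt.1 fun h => h01 ((hconst j).1 h)) hbddBelow⟩

theorem exists_Icc_subset_Ioo_diff {F : Set ℝ} (hF : F.Finite) {x y : ℝ} (hxy : x < y) :
    ∃ u v, u < v ∧ Set.Icc u v ⊆ Set.Ioo x y \ F := by
  obtain ⟨c, hc⟩ := ((Set.Ioo_infinite hxy).sdiff hF).nonempty
  obtain ⟨ε, hε, hball⟩ := Metric.isOpen_iff.1 (isOpen_Ioo.sdiff hF.isClosed) c hc
  refine ⟨c - ε / 2, c + ε / 2, by linarith, fun z hz => hball ?_⟩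
  rw [Real.ball_eq_Ioo]
  exact ⟨by linarith [hz.1], by linarith [hz.2]⟩

theorem eventually_atTop_of_forall_residue {P : ℕ → Prop} {m₀ t : ℕ} (ht : 0 < t)
    (h : ∀ s ∈ Ico m₀ (m₀ + t), ∀ᶠ j in atTop, P (s + j * t)) :
    ∀ᶠ i in atTop, P i := by
  obtain ⟨J, hJ⟩ := eventually_atTop.1 ((eventually_all_finset _).2 h)
  refine eventually_atTop.2 ⟨m₀ + J * t, fun i hi => ?_⟩
  have hs : m₀ + (i - m₀) % t ∈ Ico m₀ (m₀ + t) := by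
    simpa using Nat.mod_lt _ ht
  have hq : J ≤ (i - m₀) / t := (Nat.le_div_iff_mul_le ht).2 (by omega)
  have hi' := hJ _ hq _ hs
  rwa [add_assoc, Nat.mod_add_div', Nat.add_sub_cancel' (by nlinarith)] at hi'

theorem exists_Icc_eventually_notMem {a : ℕ → ℝ} {m₀ t : ℕ} (ht : 0 < t)
    (hlim : ∀ s ≥ m₀, ∃ L, Tendsto (fun j => a (s + j * t)) atTop (𝓝 L))
    {x y : ℝ} (hxy : x < y) :
    ∃ u v, u < v ∧ Set.Icc u v ⊆ Set.Ioo x y ∧ ∀ᶠ i in atTop, a i ∉ Set.Icc u v := by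
  choose! L hL using hlim
  obtain ⟨u, v, huv, hsub⟩ :=
    exists_Icc_subset_Ioo_diff ((Ico m₀ (m₀ + t)).finite_toSet.image L) hxy
  refine ⟨u, v, huv, hsub.trans Set.sdiff_subset,
    eventually_atTop_of_forall_residue (m₀ := m₀) ht fun s hs => ?_⟩
  have hLs : L s ∉ Set.Icc u v := fun hmem => (hsub hmem).2 ⟨s, mem_coe.2 hs, rfl⟩
  exact (hL s (mem_Ico.1 hs).1).eventually (isClosed_Icc.isOpen_compl.mem_nhds hLs)

theorem le_of_tendsto_card_lt_of_eventually_notMem {a : ℕ → ℝ} {u v : ℝ}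
    (hu : Tendsto (fun n => (((range n).filter fun i => a i < u).card : ℝ) / n) atTop (𝓝 u))
    (hv : Tendsto (fun n => (((range n).filter fun i => a i < v).card : ℝ) / n) atTop (𝓝 v))
    (h : ∀ᶠ i in atTop, a i ∉ Set.Icc u v) : v ≤ u := by
  obtain ⟨N₀, hN₀⟩ := eventually_atTop.1 h
  have hcard : ∀ n, ((range n).filter fun i => a i < v).card ≤
      ((range n).filter fun i => a i < u).card + N₀ := by
    intro n
    calc ((range n).filter fun i => a i < v).card
        ≤ ((range n).filter (fun i => a i < u) ∪ range N₀).card := by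
          refine card_le_card fun i hi => ?_
          rw [mem_filter] at hi
          by_cases hiu : a i < u
          · exact mem_union_left _ (mem_filter.2 ⟨hi.1, hiu⟩)
          · refine mem_union_right _ (mem_range.2 (not_le.1 fun hN => hN₀ i hN ?_))
            exact ⟨not_lt.1 hiu, hi.2.le⟩
      _ ≤ _ := (card_union_le _ _).trans_eq (by rw [card_range])
  have hlim := hu.add (tendsto_const_div_atTop_nhds_zero_nat (N₀ : ℝ))
  rw [add_zero] at hlim
  refine le_of_tendsto_of_tendsto' hv hlim fun n => ?_
  rw [← add_div]
  gcongr
  exact_mod_cast hcard n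

theorem EquidistSeq.not_comparison_periodic {a : ℕ → ℝ} (ha : EquidistSeq a) {m₀ t : ℕ}
    (ht : 0 < t) : ¬ ∀ i ≥ m₀, (a i < a (i + t) ↔ a (i + t) < a (i + t + t)) := by
  intro hper
  obtain ⟨hmem, -, hequi⟩ := ha
  have hlim (s : ℕ) (hs : s ≥ m₀) :
      ∃ L, Tendsto (fun j => a (s + j * t)) atTop (𝓝 L) := by
    refine exists_tendsto_of_lt_succ_iff (fun j => ?_) ⟨0, ?_⟩ ⟨1, ?_⟩
    · have e₁ : s + (j + 1) * t = s + j * t + t := by ring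
      have e₂ : s + (j + 2) * t = s + j * t + t + t := by ring
      rw [e₁, e₂]
      exact hper _ (by omega)
    · rintro _ ⟨j, rfl⟩
      exact (hmem _).1
    · rintro _ ⟨j, rfl⟩
      exact (hmem _).2
  obtain ⟨u, v, huv, hsub, hev⟩ := exists_Icc_eventually_notMem ht hlim zero_lt_one
  have hu := hsub (Set.left_mem_Icc.2 huv.le)
  have hv := hsub (Set.right_mem_Icc.2 huv.le)
  exact huv.not_ge (le_of_tendsto_card_lt_of_eventually_notMem
    (hequi u ⟨hu.1.le, hu.2.le⟩) (hequi v ⟨hv.1.le, hv.2.le⟩) hev)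

theorem stmt5_general (r : ℕ → ℕ → Prop) (h : EquidistPerm r) (n : ℕ) :
    n ≤ permComplexity r n := by
  obtain ⟨a, ha, hrep⟩ := h
  induction n with
  | zero => exact Nat.zero_le _
  | succ k ih =>
    by_contra! hlt
    have hk : permComplexity r (k + 1) ≤ k := Nat.lt_succ_iff.1 hlt
    obtain ⟨m₀, t, ht, hper⟩ := exists_comparison_periodic_of_complexity_le hk (hk.trans ih)
    exact ha.not_comparison_periodic (m₀ := m₀) ht fun i hi => by
      simpa only [hrep _ _] using hper i hi

theorem stmt5 (r : ℕ → ℕ → Prop) (h : EquidistPerm r) (n : ℕ) (hn : 1 ≤ n) :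
    n ≤ permComplexity r n :=
  stmt5_general r h n
end

section
/- The equidistributed representative of an equidistributed infinite permutation is unique: if (a[n]) and (b[n]) are both equidistributed sequences in [0,1] of pairwise distinct reals representing the same permutation (a[i] < a[j] ⟺ b[i] < b[j] for all i,j), then a[n] = b[n] for all n. Moreover, a[i] = lim_{n→∞} (1/n)·#{j < n : a[j] < a[i]}. -/
/-!
By equidistribution with `t = a i`, the term `a i` is the limiting frequency of the indices `j`
with `a j < a i`; this frequency depends only on the order that `a` induces on `ℕ`, so two
equidistributed sequences inducing the same order coincide.
-/

open Filter

open Topology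

theorem EquidistSeq.tendsto_card_filter_lt_div {a : ℕ → ℝ} (ha : EquidistSeq a) (i : ℕ) :
    Tendsto (fun n => (((Finset.range n).filter fun j => a j < a i).card : ℝ) / n)
      atTop (𝓝 (a i)) :=
  ha.2.2 (a i) (ha.1 i)

theorem filter_lt_eq_of_lt_iff_lt {ι α β : Type*} [LinearOrder α] [LinearOrder β] {a : ι → α} {b : ι → β}
    (hsame : ∀ i j, a i < a j ↔ b i < b j) (s : Finset ι) (i : ι) :
    s.filter (fun j => a j < a i) = s.filter (fun j => b j < b i) :=
  Finset.filter_congr fun j _ => hsame j i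

theorem stmt7 (a b : ℕ → ℝ) (ha : EquidistSeq a) (hb : EquidistSeq b)
    (hsame : ∀ i j, a i < a j ↔ b i < b j) :
    (∀ n, a n = b n) ∧
      ∀ i, Tendsto
        (fun n => (((Finset.range n).filter fun j => a j < a i).card : ℝ) / n)
        atTop (nhds (a i)) := by
  refine ⟨fun i => ?_, ha.tendsto_card_filter_lt_div⟩
  have hb_i := hb.tendsto_card_filter_lt_div i
  simp only [← filter_lt_eq_of_lt_iff_lt hsame] at hb_i
  exact tendsto_nhds_unique (ha.tendsto_card_filter_lt_div i) hb_i
end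

section
/- If an infinite permutation α has complexity p_α(n) = n for all n ≥ 1, then its underlying binary word s is either ultimately periodic or Sturmian (i.e., p_s(m) = m + 1 for all m). -/
open Filter

/-!
The order type of `α` on the `n + 1` positions `m, …, m + n` determines the factor of length `n`
of `s` at `m`, so `p_s(n) ≤ p_α(n + 1) = n + 1`. If equality fails for some `m`, then
`p_s(m) ≤ m`; since `p_s(0) = 1`, the complexity fails to grow at some `n < m`, so every factor
of length `n` has a unique right extension, and the first repeated factor of length `n` then
repeats with a fixed shift forever (Morse–Hedlund).
-/

def factors (w : ℕ → ℕ) (n : ℕ) : Set (List ℕ) :=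
  {u | ∃ m, u = factorAt w m n}

lemma wordComplexity_eq_ncard_factors (w : ℕ → ℕ) (n : ℕ) :
    wordComplexity w n = (factors w n).ncard :=
  rfl

lemma factorAt_mem_factors (w : ℕ → ℕ) (m n : ℕ) : factorAt w m n ∈ factors w n :=
  ⟨m, rfl⟩

lemma factorAt_eq_iff {w : ℕ → ℕ} {m m' n : ℕ} :
    factorAt w m n = factorAt w m' n ↔ ∀ k < n, w (m + k) = w (m' + k) := by
  simp [factorAt, List.map_inj_left]

lemma take_factorAt (w : ℕ → ℕ) (m n : ℕ) : (factorAt w m (n + 1)).take n = factorAt w m n := by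
  simp [factorAt, ← List.map_take, List.take_range]

lemma ncard_factors_zero (w : ℕ → ℕ) : (factors w 0).ncard = 1 := by
  have : factors w 0 = {[]} := by
    ext u
    simp [factors, factorAt]
  rw [this, Set.ncard_singleton]

lemma factorAt_succ_eq_of_ncard_factors_succ_le {w : ℕ → ℕ} {n : ℕ}
    (hfin : (factors w (n + 1)).Finite) (hle : (factors w (n + 1)).ncard ≤ (factors w n).ncard)
    {i j : ℕ} (hij : factorAt w i n = factorAt w j n) :
    factorAt w i (n + 1) = factorAt w j (n + 1) := by
  by_contra hne
  -- `take n` stays onto `factors w n` after removing one of two distinct extensions of a factor.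
  have hsurj : factors w n ⊆ List.take n '' (factors w (n + 1) \ {factorAt w j (n + 1)}) := by
    rintro u ⟨k, rfl⟩
    by_cases hk : factorAt w k (n + 1) = factorAt w j (n + 1)
    · refine ⟨factorAt w i (n + 1), ⟨factorAt_mem_factors w i _, hne⟩, ?_⟩
      rw [take_factorAt, hij, ← take_factorAt w j, ← hk, take_factorAt]
    · exact ⟨_, ⟨factorAt_mem_factors w k _, hk⟩, take_factorAt w k n⟩
  have hdiff := hfin.sdiff (t := {factorAt w j (n + 1)})
  have hcard := Set.ncard_sdiff_singleton_add_one (factorAt_mem_factors w j _) hfin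
  have := (Set.ncard_le_ncard hsurj (hdiff.image _)).trans (Set.ncard_image_le hdiff)
  omega

lemma ultPeriodicWord_of_factorAt_eq {w : ℕ → ℕ} {n i j : ℕ}
    (hext : ∀ i j, factorAt w i n = factorAt w j n → factorAt w i (n + 1) = factorAt w j (n + 1))
    (hij : i ≤ j) (heq : factorAt w i n = factorAt w j n) :
    UltPeriodicWord w (j - i) := by
  have hshift : ∀ k, factorAt w (i + k) n = factorAt w (j + k) n := by
    intro k
    induction k with
    | zero => exact heq
    | succ k ih =>
      have h := factorAt_eq_iff.mp (hext _ _ ih)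
      refine factorAt_eq_iff.mpr fun l hl => ?_
      simpa [Nat.add_assoc, Nat.add_comm 1 l] using h (l + 1) (by omega)
  refine ⟨i + n, fun t ht => ?_⟩
  obtain ⟨k, rfl⟩ : ∃ k, t = i + k + n := ⟨t - i - n, by omega⟩
  have h := factorAt_eq_iff.mp (hext _ _ (hshift k)) n (by omega)
  rw [show i + k + n + (j - i) = j + k + n by omega]
  exact h.symm

lemma exists_lt_apply_succ_le_of_apply_le {f : ℕ → ℕ} (h0 : 1 ≤ f 0) {m : ℕ} (hm : f m ≤ m) :
    ∃ n < m, f (n + 1) ≤ f n := by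
  by_contra! h
  have grow : ∀ j ≤ m, j + 1 ≤ f j := by
    intro j hj
    induction j with
    | zero => exact h0
    | succ j ih => have := ih (by omega); have := h j (by omega); omega
  have := grow m le_rfl
  omega

/-- The Morse–Hedlund theorem. -/
theorem exists_ultPeriodicWord_of_wordComplexity_le {w : ℕ → ℕ}
    (hfin : ∀ n, (factors w n).Finite) {m : ℕ} (hm : wordComplexity w m ≤ m) :
    ∃ p, 1 ≤ p ∧ UltPeriodicWord w p := by
  obtain ⟨n, -, hle⟩ := exists_lt_apply_succ_le_of_apply_le (f := fun n => (factors w n).ncard)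
    (ncard_factors_zero w).ge hm
  obtain ⟨i, j, hij, heq⟩ :=
    (hfin n).exists_lt_map_eq_of_forall_mem (f := fun k => factorAt w k n)
      (factorAt_mem_factors w · n)
  exact ⟨j - i, by omega, ultPeriodicWord_of_factorAt_eq
    (fun _ _ => factorAt_succ_eq_of_ncard_factors_succ_le (hfin _) hle) hij.le heq⟩

open Classical in
noncomputable def finUnderlying {n : ℕ} (f : Fin (n + 1) → Fin (n + 1) → Prop) : List ℕ :=
  List.ofFn fun k : Fin n => if f k.castSucc k.succ then 0 else 1

lemma factorAt_underlying (r : ℕ → ℕ → Prop) (m n : ℕ) :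
    factorAt (underlying r) m n = finUnderlying (permFactor r m (n + 1)) := by
  refine List.ext_getElem (by simp [factorAt, finUnderlying]) fun i _ _ => ?_
  simp only [factorAt, finUnderlying, List.getElem_map, List.getElem_range, List.getElem_ofFn]
  rfl

lemma factors_underlying_eq_image (r : ℕ → ℕ → Prop) (n : ℕ) :
    factors (underlying r) n =
      finUnderlying '' {f | ∃ m, f = permFactor r m (n + 1)} := by
  ext u
  simp [factors, factorAt_underlying, eq_comm]

theorem stmt12_general (r : ℕ → ℕ → Prop)
    (hcompl : ∀ n : ℕ, 1 ≤ n → permComplexity r n = n) :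
    (∃ p : ℕ, 1 ≤ p ∧ UltPeriodicWord (underlying r) p) ∨
      (∀ m : ℕ, wordComplexity (underlying r) m = m + 1) := by
  have hpermFin : ∀ n, {f | ∃ m, f = permFactor r m (n + 1)}.Finite := fun n =>
    Set.finite_of_ncard_ne_zero (by rw [← permComplexity, hcompl _ n.succ_pos]; omega)
  have hfin : ∀ n, (factors (underlying r) n).Finite := fun n => by
    rw [factors_underlying_eq_image]
    exact (hpermFin n).image _
  have hle : ∀ n, wordComplexity (underlying r) n ≤ n + 1 := fun n => by
    rw [wordComplexity_eq_ncard_factors, factors_underlying_eq_image]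
    exact (Set.ncard_image_le (hpermFin n)).trans_eq (hcompl (n + 1) n.succ_pos)
  refine or_iff_not_imp_right.mpr fun hstrm => ?_
  obtain ⟨m, hm⟩ := not_forall.mp hstrm
  exact exists_ultPeriodicWord_of_wordComplexity_le hfin (m := m) (by have := hle m; omega)

theorem stmt12 (r : ℕ → ℕ → Prop) [IsStrictTotalOrder ℕ r]
    (hcompl : ∀ n : ℕ, 1 ≤ n → permComplexity r n = n) :
    (∃ p : ℕ, 1 ≤ p ∧ UltPeriodicWord (underlying r) p) ∨
      (∀ m : ℕ, wordComplexity (underlying r) m = m + 1) :=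
  stmt12_general r hcompl
end

section
/- If α is an equidistributed infinite permutation with p_α(n) = n for all n ≥ 1, then the underlying binary word s of α is aperiodic (not ultimately periodic). -/
open Filter

/-!
Let `q` be the least eventual period of the underlying word `s`. An equidistributed permutation
has no monotone subsequence with bounded gaps: such a subsequence converges, so a fixed positive
proportion of all terms would lie in arbitrarily short intervals. Hence `q = 1` is impossible
(α would be eventually monotone), and for `q ≥ 2` the restriction of α to each residue class
mod `q` has, by the Morse–Hedlund argument, at least three factors of length 3. They yield
`3q` distinct factors of α of length `2q + 1`: factors starting in different classes differ in
their underlying words because `q` is the least period, and factors in the same class differ in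
the relative order of their entries at offsets `0, q, 2q`. So `3q ≤ p_α(2q + 1) = 2q + 1`.
-/

lemma le_add_mul_of_forall_sub_le {n : ℕ → ℕ} {N : ℕ} (hgap : ∀ i, n (i + 1) - n i ≤ N)
    (k : ℕ) : n k ≤ n 0 + k * N := by
  induction k with
  | zero => simp
  | succ k ih => have := hgap k; rw [Nat.succ_mul]; omega

lemma div_sub_le_card_filter_lt_sub_card_filter_lt {a : ℕ → ℝ} {n : ℕ → ℕ} (hn : StrictMono n) {N : ℕ}
    (hN : 0 < N) (hgap : ∀ i, n (i + 1) - n i ≤ N) {s t : ℝ} {K : ℕ}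
    (hK : ∀ k ≥ K, (a ∘ n) k ∈ Set.Ico s t) (m : ℕ) :
    (m : ℝ) / N - (n 0 + K + 1) ≤
      (((Finset.range m).filter fun i => a i < t).card : ℝ) -
        ((Finset.range m).filter fun i => a i < s).card := by
  have hsub : (Finset.range m).filter (fun i => a i < s) ⊆
      (Finset.range m).filter (fun i => a i < t) :=
    Finset.monotone_filter_right _ fun i _ h => h.trans ((hK K le_rfl).1.trans_lt (hK K le_rfl).2)
  have himage : (Finset.Ico K (m / N - n 0)).image n ⊆
      (Finset.range m).filter (fun i => a i < t) \ (Finset.range m).filter (fun i => a i < s) := by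
    intro i hi
    obtain ⟨k, hk, rfl⟩ := Finset.mem_image.1 hi
    obtain ⟨hKk, hkm⟩ := Finset.mem_Ico.1 hk
    have hnk : n k < m := by
      have h1 : (k + n 0 + 1) * N ≤ m := (Nat.le_div_iff_mul_le hN).1 (by omega)
      nlinarith [le_add_mul_of_forall_sub_le hgap k]
    have hak := hK k hKk
    simp only [Function.comp_apply, Set.mem_Ico] at hak
    simp [hnk, hak.1, hak.2]
  have hcard := Finset.card_le_card himage
  rw [Finset.card_image_of_injective _ hn.injective, Nat.card_Ico,
    Finset.card_sdiff_of_subset hsub] at hcard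
  have hsub' := Finset.card_le_card hsub
  have hdiv : (m : ℝ) / N < (m / N : ℕ) + 1 := by
    rw [← Nat.floor_div_eq_div (K := ℝ)]
    exact Nat.lt_floor_add_one _
  have hnat : m / N + ((Finset.range m).filter fun i => a i < s).card ≤
      ((Finset.range m).filter fun i => a i < t).card + n 0 + K := by omega
  have hreal := (Nat.cast_le (α := ℝ)).2 hnat
  push_cast at hreal
  linarith

namespace EquidistSeq

variable {a : ℕ → ℝ}

lemma tendsto_card_lt_div (ha : EquidistSeq a) (t : ℝ) :
    Tendsto (fun n => (((Finset.range n).filter fun i => a i < t).card : ℝ) / n)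
      atTop (nhds (max 0 (min t 1))) := by
  rcases lt_or_ge t 0 with ht0 | ht0
  · have hempty : ∀ n, (Finset.range n).filter (fun i => a i < t) = ∅ := fun n =>
      Finset.filter_false_of_mem fun i _ => not_lt.2 (ht0.le.trans (ha.1 i).1)
    simp only [hempty, Finset.card_empty, Nat.cast_zero, zero_div]
    rw [max_eq_left (min_le_of_left_le ht0.le)]
    exact tendsto_const_nhds
  rcases le_or_gt t 1 with ht1 | ht1
  · rw [min_eq_left ht1, max_eq_right ht0]
    exact ha.2.2 t ⟨ht0, ht1⟩
  · have hall : ∀ n, (Finset.range n).filter (fun i => a i < t) = Finset.range n := fun n =>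
      Finset.filter_true_of_mem fun i _ => (ha.1 i).2.trans_lt ht1
    simp only [hall, Finset.card_range]
    rw [min_eq_right ht1.le, max_eq_right zero_le_one]
    refine tendsto_const_nhds.congr' ?_
    filter_upwards [eventually_gt_atTop 0] with n hn
    rw [div_self (by positivity)]

lemma not_tendsto_comp (ha : EquidistSeq a) {n : ℕ → ℕ} (hn : StrictMono n) {N : ℕ}
    (hgap : ∀ i, n (i + 1) - n i ≤ N) (L : ℝ) : ¬ Tendsto (a ∘ n) atTop (nhds L) := by
  intro hL
  have hN : 0 < N := by
    have : n 0 < n (0 + 1) := hn (Nat.lt_succ_self 0)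
    have := hgap 0
    omega
  set ε : ℝ := 1 / (4 * N)
  have hε : 0 < ε := by positivity
  obtain ⟨K, hK⟩ := eventually_atTop.1 (hL.eventually (Ioo_mem_nhds
    (show L - ε < L by linarith) (show L < L + ε by linarith)))
  have hcount := div_sub_le_card_filter_lt_sub_card_filter_lt hn hN hgap
    (fun k hk => Set.Ioo_subset_Ico_self (hK k hk))
  have hlim := (ha.tendsto_card_lt_div (L + ε)).sub (ha.tendsto_card_lt_div (L - ε))
  have hlower : Tendsto (fun m : ℕ => 1 / (N : ℝ) - (n 0 + K + 1) / m) atTop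
      (nhds (1 / N - 0)) :=
    tendsto_const_nhds.sub (tendsto_const_div_atTop_nhds_zero_nat _)
  have hge := le_of_tendsto_of_tendsto hlower hlim <| by
    filter_upwards [eventually_gt_atTop 0] with m hm
    have hm' : (0 : ℝ) < m := by exact_mod_cast hm
    rw [← sub_div, le_div_iff₀ hm', sub_mul, div_mul_cancel₀ _ hm'.ne', one_div_mul_eq_div]
    exact hcount m
  have hclamp : max 0 (min (L + ε) 1) - max 0 (min (L - ε) 1) ≤ 2 * ε := by
    simp only [max_def, min_def]; split_ifs <;> linarith
  have : 1 / (N : ℝ) = 4 * ε := by simp only [ε]; field_simp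
  linarith

lemma not_monotone_comp (ha : EquidistSeq a) {n : ℕ → ℕ} (hn : StrictMono n) {N : ℕ}
    (hgap : ∀ i, n (i + 1) - n i ≤ N) : ¬ Monotone (a ∘ n) := fun hmono =>
  ha.not_tendsto_comp hn hgap _ <|
    tendsto_atTop_ciSup hmono ⟨1, by rintro _ ⟨i, rfl⟩; exact (ha.1 _).2⟩

lemma not_antitone_comp (ha : EquidistSeq a) {n : ℕ → ℕ} (hn : StrictMono n) {N : ℕ}
    (hgap : ∀ i, n (i + 1) - n i ≤ N) : ¬ Antitone (a ∘ n) := fun hanti =>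
  ha.not_tendsto_comp hn hgap _ <|
    tendsto_atTop_ciInf hanti ⟨0, by rintro _ ⟨i, rfl⟩; exact (ha.1 _).1⟩

lemma not_hasNMonotone (ha : EquidistSeq a) {r : ℕ → ℕ → Prop} (hrep : Represents a r)
    (N : ℕ) : ¬ HasNMonotone r N := by
  rintro ⟨n, hn, hgap, hinc | hdec⟩
  · exact ha.not_monotone_comp hn hgap
      (monotone_nat_of_le_succ fun i => ((hrep _ _).1 (hinc i)).le)
  · exact ha.not_antitone_comp hn hgap
      (antitone_nat_of_succ_le fun i => ((hrep _ _).1 (hdec i)).le)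

end EquidistSeq

section Factors

variable {r : ℕ → ℕ → Prop}

lemma permFactor_succ (k n : ℕ) :
    (fun u v : Fin n => permFactor r k (n + 1) u.succ v.succ) = permFactor r (k + 1) n := by
  funext u v
  simp only [permFactor, Fin.val_succ, Nat.add_right_comm k, add_assoc]

lemma apply_add_mul_eq_of_apply_eq {β : Type*} {F : ℕ → β}
    (hdet : ∀ k k', F k = F k' → F (k + 1) = F (k' + 1)) {K τ : ℕ} (h : F K = F (K + τ))
    (i : ℕ) : F (K + i * τ) = F K := by
  have hshift : ∀ δ, F (K + δ) = F (K + τ + δ) := by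
    intro δ
    induction δ with
    | zero => exact h
    | succ δ ih => exact hdet _ _ ih
  induction i with
  | zero => simp
  | succ i ih => rw [Nat.succ_mul, ← add_assoc, add_right_comm, ← hshift, ih]

lemma hasNMonotone_of_permFactor_eq (htot : ∀ i j, i ≠ j → ¬ r i j → r j i) {n K τ : ℕ}
    (hτ : 0 < τ) (hτn : τ < n) (h : ∀ i, permFactor r (K + i * τ) n = permFactor r K n) :
    HasNMonotone r τ := by
  have hcmp : ∀ i, r (K + i * τ) (K + (i + 1) * τ) ↔ r K (K + τ) := fun i => by
    have := congrFun (congrFun (h i) ⟨0, hτ.trans hτn⟩) ⟨τ, hτn⟩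
    simpa only [permFactor, add_zero, add_mul, one_mul, add_assoc] using iff_of_eq this
  refine ⟨fun i => K + i * τ, strictMono_nat_of_lt_succ fun i => ?_, fun i => ?_, ?_⟩
  · rw [add_mul, one_mul]; omega
  · dsimp only; rw [add_mul, one_mul]; omega
  · by_cases hK : r K (K + τ)
    · exact Or.inl fun i => (hcmp i).2 hK
    · refine Or.inr fun i => htot _ _ ?_ fun h => hK ((hcmp i).1 h)
      dsimp only; rw [add_mul, one_mul]; omega

theorem le_encard_range_permFactor (htot : ∀ i j, i ≠ j → ¬ r i j → r j i)
    (hmono : ∀ N, ¬ HasNMonotone r N) (n : ℕ) :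
    (n : ℕ∞) ≤ (Set.range (permFactor r · n)).encard := by
  induction n with
  | zero => simp
  | succ n ih =>
    by_contra! hlt
    set R := Set.range (permFactor r · (n + 1))
    set restrict := fun (f : Fin (n + 1) → Fin (n + 1) → Prop) (u v : Fin n) =>
      f u.castSucc v.castSucc
    have hR : R.encard ≤ n := by
      rw [Nat.cast_add, Nat.cast_one] at hlt
      exact Order.le_of_lt_add_one hlt
    have hfin : R.Finite := Set.finite_of_encard_le_coe hR
    -- `n ≤ p(n) ≤ p(n + 1) ≤ n`: a factor of length `n + 1` is determined by its prefix,
    -- hence determines the next factor.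
    have hinj : Set.InjOn restrict R := by
      refine hfin.injOn_of_encard_image_eq (le_antisymm (Set.encard_image_le _ _) ?_)
      rw [← Set.range_comp]
      exact hR.trans ih
    have hdet : ∀ k k', permFactor r k (n + 1) = permFactor r k' (n + 1) →
        permFactor r (k + 1) (n + 1) = permFactor r (k' + 1) (n + 1) := by
      intro k k' h
      refine hinj (Set.mem_range_self _) (Set.mem_range_self _) ?_
      change permFactor r (k + 1) n = permFactor r (k' + 1) n
      rw [← permFactor_succ, ← permFactor_succ, h]
    obtain ⟨i, hi, j, hj, hij, hF⟩ := Set.exists_ne_map_eq_of_encard_lt_of_maps_to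
      (s := {i | i < n + 1}) (f := (permFactor r · (n + 1)))
      (by rw [Set.Nat.encard_range]; exact hlt) fun k _ => Set.mem_range_self k
    simp only [Set.mem_ofPred_eq] at hi hj
    obtain ⟨K, τ, hτ, hτn, hKτ⟩ : ∃ K τ, 0 < τ ∧ τ < n + 1 ∧
        permFactor r K (n + 1) = permFactor r (K + τ) (n + 1) := by
      rcases lt_or_gt_of_ne hij with h | h
      · exact ⟨i, j - i, by omega, by omega, by rwa [Nat.add_sub_cancel' h.le]⟩
      · exact ⟨j, i - j, by omega, by omega, by rw [Nat.add_sub_cancel' h.le]; exact hF.symm⟩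
    exact hmono τ (hasNMonotone_of_permFactor_eq htot hτ hτn
      (apply_add_mul_eq_of_apply_eq hdet hKτ))

lemma exists_injective_permFactor (htot : ∀ i j, i ≠ j → ¬ r i j → r j i)
    (hmono : ∀ N, ¬ HasNMonotone r N) (n : ℕ) :
    ∃ κ : Fin n → ℕ, Function.Injective fun i => permFactor r (κ i) n := by
  obtain ⟨g, hg, hinj⟩ := (Set.finite_univ (α := Fin n)).exists_injOn_of_encard_le
    (t := Set.range (permFactor r · n)) (by simpa using le_encard_range_permFactor htot hmono n)
  choose κ hκ using fun i => hg (Set.mem_univ i)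
  exact ⟨κ, fun i j h => hinj (Set.mem_univ i) (Set.mem_univ j) (by simpa only [hκ] using h)⟩

end Factors

section Words

variable {w : ℕ → ℕ}

lemma add_mul_eq_of_periodic {N p : ℕ} (h : ∀ i ≥ N, w (i + p) = w i) {i : ℕ} (hi : N ≤ i)
    (k : ℕ) : w (i + k * p) = w i := by
  induction k with
  | zero => simp
  | succ k ih => rw [Nat.succ_mul, ← add_assoc, h _ (by omega), ih]

lemma UltPeriodicWord.mod {p q : ℕ} (hp : UltPeriodicWord w p) (hq : UltPeriodicWord w q) :
    UltPeriodicWord w (p % q) := by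
  obtain ⟨N, hN⟩ := hp
  obtain ⟨M, hM⟩ := hq
  refine ⟨max N M, fun i hi => ?_⟩
  calc w (i + p % q) = w (i + p % q + p / q * q) :=
        (add_mul_eq_of_periodic hM (by omega) _).symm
    _ = w (i + p) := by rw [add_assoc, Nat.mod_add_div']
    _ = w i := hN i (by omega)

lemma ultPeriodicWord_sub_of_window_eq {q N z z' : ℕ} (hq0 : 0 < q)
    (hq : ∀ i ≥ N, w (i + q) = w i) (hz : N ≤ z) (hzz' : z ≤ z')
    (hwin : ∀ k < q, w (z + k) = w (z' + k)) : UltPeriodicWord w (z' - z) := by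
  refine ⟨z, fun i hi => ?_⟩
  have hdiv := Nat.mod_add_div' (i - z) q
  calc w (i + (z' - z)) = w (z' + (i - z) % q + (i - z) / q * q) := by congr 1; omega
    _ = w (z + (i - z) % q + (i - z) / q * q) := by
        rw [add_mul_eq_of_periodic hq (by omega), add_mul_eq_of_periodic hq (by omega),
          hwin _ (Nat.mod_lt _ hq0)]
    _ = w i := by congr 1; omega

lemma modEq_of_window_eq {q N z z' : ℕ} (hq0 : 0 < q) (hq : ∀ i ≥ N, w (i + q) = w i)
    (hmin : ∀ e, 0 < e → e < q → ¬ UltPeriodicWord w e) (hz : N ≤ z) (hz' : N ≤ z')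
    (hwin : ∀ k < q, w (z + k) = w (z' + k)) : z ≡ z' [MOD q] := by
  wlog hle : z ≤ z' generalizing z z'
  · exact (this hz' hz (fun k hk => (hwin k hk).symm) (by omega)).symm
  have hmod := (ultPeriodicWord_sub_of_window_eq hq0 hq hz hle hwin).mod ⟨N, hq⟩
  refine (Nat.modEq_iff_dvd' hle).2 (Nat.dvd_of_mod_eq_zero ?_)
  by_contra hne
  exact hmin _ (Nat.pos_of_ne_zero hne) (Nat.mod_lt _ hq0) hmod

end Words

section Underlying

variable {r : ℕ → ℕ → Prop}

lemma underlying_eq_zero_iff {i : ℕ} : underlying r i = 0 ↔ r i (i + 1) := by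
  unfold underlying
  split_ifs with h <;> simp [h]

lemma underlying_add_eq_of_permFactor_eq {m m' n k : ℕ}
    (h : permFactor r m n = permFactor r m' n) (hk : k + 1 < n) :
    underlying r (m + k) = underlying r (m' + k) := by
  have hr := congrFun (congrFun h ⟨k, by omega⟩) ⟨k + 1, hk⟩
  simp only [permFactor, ← add_assoc] at hr
  unfold underlying
  congr 1

lemma hasNMonotone_one_of_ultPeriodicWord_underlying (htot : ∀ i j, i ≠ j → ¬ r i j → r j i)
    (h : UltPeriodicWord (underlying r) 1) : HasNMonotone r 1 := by
  obtain ⟨N, hN⟩ := h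
  have hconst : ∀ i, underlying r (N + i) = underlying r N := fun i => by
    simpa using add_mul_eq_of_periodic hN le_rfl i
  refine ⟨fun i => N + i, fun _ _ h => Nat.add_lt_add_left h N, fun i => by dsimp only; omega, ?_⟩
  by_cases hr : r N (N + 1)
  · exact Or.inl fun i =>
      underlying_eq_zero_iff.1 ((hconst i).trans (underlying_eq_zero_iff.2 hr))
  · exact Or.inr fun i => htot _ _ (by dsimp only; omega) fun h' =>
      hr (underlying_eq_zero_iff.1 ((hconst i).symm.trans (underlying_eq_zero_iff.2 h')))

lemma HasNMonotone.of_comp_add_mul {c q N : ℕ} (hq : 0 < q)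
    (h : HasNMonotone (fun u v => r (c + u * q) (c + v * q)) N) : HasNMonotone r (N * q) := by
  obtain ⟨n, hn, hgap, hmon⟩ := h
  refine ⟨fun i => c + n i * q, fun i j hij => ?_, fun i => ?_, hmon⟩
  · exact Nat.add_lt_add_left (Nat.mul_lt_mul_of_pos_right (hn hij) hq) c
  · dsimp only
    rw [Nat.add_sub_add_left, ← Nat.sub_mul]
    exact Nat.mul_le_mul_right q (hgap i)

end Underlying

section Counting

variable {r : ℕ → ℕ → Prop}

lemma encard_range_permFactor_eq {n : ℕ} (hn : 0 < n) (h : permComplexity r n = n) :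
    (Set.range (permFactor r · n)).encard = n := by
  have hset : {f | ∃ m, f = permFactor r m n} = Set.range (permFactor r · n) := by
    ext; simp [eq_comm]
  rw [permComplexity, hset] at h
  rw [← (Set.finite_of_ncard_pos (by rw [h]; exact hn)).cast_ncard_eq, h]

lemma three_mul_le_encard_range_permFactor (htot : ∀ i j, i ≠ j → ¬ r i j → r j i)
    (hmono : ∀ N, ¬ HasNMonotone r N) {q N : ℕ} (hq0 : 0 < q)
    (hq : ∀ i ≥ N, underlying r (i + q) = underlying r i)
    (hmin : ∀ e, 0 < e → e < q → ¬ UltPeriodicWord (underlying r) e) :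
    ((3 * q : ℕ) : ℕ∞) ≤ (Set.range (permFactor r · (2 * q + 1))).encard := by
  have hclass : ∀ j : Fin q, ∃ κ : Fin 3 → ℕ, Function.Injective fun i =>
      permFactor (fun u v => r (N + j + u * q) (N + j + v * q)) (κ i) 3 := fun j =>
    exists_injective_permFactor
      (fun u v huv => htot _ _ fun h => huv (Nat.eq_of_mul_eq_mul_right hq0 (by omega)))
      (fun M hM => hmono _ (hM.of_comp_add_mul hq0)) 3
  choose κ hκ using hclass
  set G : Fin q × Fin 3 → Fin (2 * q + 1) → Fin (2 * q + 1) → Prop :=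
    fun ji => permFactor r (N + ji.1 + κ ji.1 ji.2 * q) (2 * q + 1)
  have hG : Function.Injective G := by
    rintro ⟨j, i⟩ ⟨j', i'⟩ h
    have hmod : N + j + κ j i * q ≡ N + j' + κ j' i' * q [MOD q] :=
      modEq_of_window_eq hq0 hq hmin (by omega) (by omega) fun k hk =>
        underlying_add_eq_of_permFactor_eq h (by omega)
    have hjj' : j = j' := by
      unfold Nat.ModEq at hmod
      simp only [Nat.add_mul_mod_self_right] at hmod
      exact Fin.ext (Nat.ModEq.eq_of_lt_of_lt (Nat.ModEq.add_left_cancel' N hmod) j.2 j'.2)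
    subst hjj'
    have hrow : ∀ u : Fin 3, u * q < 2 * q + 1 := fun u =>
      Nat.lt_succ_of_le (Nat.mul_le_mul_right q (Nat.le_of_lt_succ u.2))
    have hii' : i = i' := hκ j <| funext₂ fun u v => by
      have huv := congrFun (congrFun h ⟨u * q, hrow u⟩) ⟨v * q, hrow v⟩
      simpa only [G, permFactor, add_mul, add_assoc] using huv
    rw [hii']
  calc ((3 * q : ℕ) : ℕ∞) = ENat.card (Fin q × Fin 3) := by simp [mul_comm]
    _ ≤ (Set.range G).encard := hG.encard_range
    _ ≤ (Set.range (permFactor r · (2 * q + 1))).encard :=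
      Set.encard_le_encard (Set.range_subset_iff.2 fun _ => Set.mem_range_self _)

end Counting

theorem stmt13 (r : ℕ → ℕ → Prop) (h : EquidistPerm r)
    (hcompl : ∀ n : ℕ, 1 ≤ n → permComplexity r n = n) :
    ¬ ∃ p : ℕ, 1 ≤ p ∧ UltPeriodicWord (underlying r) p := by
  classical
  intro hex
  obtain ⟨a, ha, hrep⟩ := h
  have htot : ∀ i j, i ≠ j → ¬ r i j → r j i := fun i j hij hr =>
    (hrep j i).2 (lt_of_le_of_ne (not_lt.1 (mt (hrep i j).2 hr)) (ha.2.1.ne hij.symm))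
  have hmono := ha.not_hasNMonotone hrep
  set q := Nat.find hex
  obtain ⟨hq, N, hN⟩ : 1 ≤ q ∧ UltPeriodicWord (underlying r) q := Nat.find_spec hex
  have hmin : ∀ e, 0 < e → e < q → ¬ UltPeriodicWord (underlying r) e :=
    fun e he hlt hper => Nat.find_min hex hlt ⟨he, hper⟩
  rcases (show q = 1 ∨ 2 ≤ q by omega) with hq1 | hq2
  · exact hmono 1 (hasNMonotone_one_of_ultPeriodicWord_underlying htot (hq1 ▸ ⟨N, hN⟩))
  · have hle := three_mul_le_encard_range_permFactor htot hmono hq hN hmin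
    rw [encard_range_permFactor_eq (by omega) (hcompl _ (by omega))] at hle
    norm_cast at hle
    omega
end

section
/- The Sturmian permutation β_{σ,ρ} has factor complexity p_β(n) = n for all n ≥ 1. -/
open Filter

/-!
With `x = ρ + mσ`, the factor at position `m` is the order type of `fract (x + kσ)`, `k < n`.
Since `fract (x + kσ) = fract x + fract (kσ) - [k ∈ W x]`, where `W x` is the set of `k` for which
adding `fract (kσ)` to `fract x` wraps around `1`, this order type and `W x` determine each other:
`k ∈ W x` exactly when `k` lies below position `0`. The sets `W x` grow with `fract x`, so they are
determined by their sizes, which are `< n` because `0 ∉ W x`. Conversely, by density of the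
irrational rotation the orbit enters, for every `j < n`, the gap just below `1 - fract (jσ)`,
where `W x = {i | fract (jσ) < fract (iσ)}`; these `n` sets have distinct sizes, so all `n`
sizes occur.
-/

open Finset Function

section FractAdd

variable {R : Type*} [CommRing R] [LinearOrder R] [IsStrictOrderedRing R] [FloorRing R]

theorem Int.fract_add_eq_ite (a b : R) :
    Int.fract (a + b) =
      Int.fract a + Int.fract b - if 1 ≤ Int.fract a + Int.fract b then 1 else 0 := by
  have ha := Int.fract_nonneg a
  have hb := Int.fract_nonneg b
  have ha' := Int.fract_lt_one a
  have hb' := Int.fract_lt_one b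
  rw [Int.fract_eq_iff]
  split_ifs with h
  · exact ⟨by linarith, by linarith, ⌊a⌋ + ⌊b⌋ + 1, by push_cast; simp only [Int.fract]; ring⟩
  · exact ⟨by linarith, by linarith, ⌊a⌋ + ⌊b⌋, by push_cast; simp only [Int.fract]; ring⟩

end FractAdd

theorem exists_nat_fract_add_mul_mem_Ioo_of_pos {a b δ : ℝ} (c : ℝ) (ha : 0 ≤ a) (hb : b ≤ 1)
    (hδ : 0 < δ) (hδab : δ < b - a) : ∃ k : ℕ, Int.fract (c + k * δ) ∈ Set.Ioo a b := by
  obtain ⟨N, hN⟩ : ∃ N : ℤ, c ≤ a + N := ⟨⌈c - a⌉, by linarith [Int.le_ceil (c - a)]⟩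
  have hq : 0 ≤ (a + N - c) / δ := div_nonneg (by linarith) hδ.le
  set k := ⌊(a + N - c) / δ⌋₊ + 1
  have hk_gt : a + N - c < k * δ := by
    rw [← div_lt_iff₀ hδ]
    exact_mod_cast Nat.lt_floor_add_one _
  have hk_le : (k : ℝ) * δ ≤ a + N - c + δ := by
    have := (le_div_iff₀ hδ).1 (Nat.floor_le hq)
    push_cast [k]
    linarith
  have hfract : Int.fract (c + k * δ) = c + k * δ - N :=
    Int.fract_eq_iff.2 ⟨by linarith, by linarith, N, by ring⟩
  exact ⟨k, by rw [hfract]; constructor <;> linarith⟩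

theorem exists_nat_fract_add_mul_mem_Ioo_of_abs_lt {a b δ : ℝ} (c : ℝ) (ha : 0 ≤ a) (hb : b ≤ 1)
    (hδ : δ ≠ 0) (hδab : |δ| < b - a) : ∃ k : ℕ, Int.fract (c + k * δ) ∈ Set.Ioo a b := by
  rcases hδ.lt_or_gt with hneg | hpos
  · -- reflect through `x ↦ -x`, which acts on fractional parts as `t ↦ 1 - t` away from `0`
    rw [abs_of_neg hneg] at hδab
    obtain ⟨k, hk_lo, hk_hi⟩ := exists_nat_fract_add_mul_mem_Ioo_of_pos (-c) (a := 1 - b)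
      (b := 1 - a) (by linarith) (by linarith) (neg_pos.2 hneg) (by linarith)
    have hne : Int.fract (-c + k * -δ) ≠ 0 := by linarith
    refine ⟨k, ?_⟩
    rw [show c + k * δ = -(-c + k * -δ) by ring, Int.fract_neg hne]
    constructor <;> linarith
  · exact exists_nat_fract_add_mul_mem_Ioo_of_pos c ha hb hpos (by rwa [abs_of_pos hpos] at hδab)

namespace Irrational

variable {σ : ℝ}

theorem exists_nat_fract_add_mul_mem_Ioo (hσ : Irrational σ) (ρ : ℝ) {a b : ℝ}
    (ha : 0 ≤ a) (hb : b ≤ 1) (hab : a < b) :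
    ∃ m : ℕ, Int.fract (ρ + m * σ) ∈ Set.Ioo a b := by
  obtain ⟨N, hN⟩ := exists_nat_one_div_lt (sub_pos.2 hab)
  obtain ⟨k, hk0, -, hk⟩ := Real.exists_nat_abs_mul_sub_round_le σ N.succ_pos
  set δ := k * σ - round (k * σ)
  have hδ : δ ≠ 0 := sub_ne_zero.2 ((hσ.natCast_mul hk0.ne').ne_int _)
  have hδab : |δ| < b - a := calc
    |δ| ≤ 1 / ((N + 1 : ℕ) + 1) := hk
    _ ≤ 1 / (N + 1) := by gcongr; linarith
    _ < b - a := hN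
  obtain ⟨j, hj⟩ := exists_nat_fract_add_mul_mem_Ioo_of_abs_lt ρ ha hb hδ hδab
  refine ⟨j * k, ?_⟩
  rwa [show ρ + ((j * k : ℕ) : ℝ) * σ = ρ + j * δ + ((j * round (k * σ) : ℤ) : ℝ) by
    push_cast [δ]; ring, Int.fract_add_intCast]

theorem exists_nat_fract_add_mul_just_below (hσ : Irrational σ) (ρ : ℝ) (s : Finset ℝ) {b : ℝ}
    (hb0 : 0 < b) (hb1 : b ≤ 1) :
    ∃ m : ℕ, Int.fract (ρ + m * σ) < b ∧ ∀ p ∈ s, p < b → p < Int.fract (ρ + m * σ) := by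
  set a := (insert 0 (s.filter (· < b))).max' (insert_nonempty _ _)
  have ha0 : 0 ≤ a := le_max' _ _ (mem_insert_self _ _)
  have hab : a < b := by
    refine (max'_lt_iff _ _).2 fun p hp => ?_
    rcases mem_insert.1 hp with rfl | hp
    · exact hb0
    · exact (mem_filter.1 hp).2
  obtain ⟨m, ham, hmb⟩ := hσ.exists_nat_fract_add_mul_mem_Ioo ρ ha0 hb1 hab
  exact ⟨m, hmb, fun p hp hpb =>
    (le_max' _ _ (mem_insert_of_mem (mem_filter.2 ⟨hp, hpb⟩))).trans_lt ham⟩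

theorem injective_fract_natCast_mul (hσ : Irrational σ) :
    Injective fun k : ℕ => Int.fract (k * σ) := by
  intro j k hjk
  obtain ⟨z, hz⟩ := Int.fract_eq_fract.1 hjk
  by_contra hne
  have hne' : (j - k : ℤ) ≠ 0 := sub_ne_zero.2 (Int.natCast_inj.not.2 hne)
  exact (hσ.intCast_mul hne').ne_int z (by push_cast; linarith)

end Irrational

theorem injective_card_filter_lt_of_injective {α β : Type*} [Fintype α] [LinearOrder β] {f : α → β}
    (hf : Injective f) : Injective fun j => #{i | f j < f i} := by
  have hlt : ∀ j k, f j < f k → #{i | f k < f i} < #{i | f j < f i} := fun j k hjk =>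
    card_lt_card ⟨monotone_filter_right _ fun _ _ h => hjk.trans h,
      fun hsub => lt_irrefl (f k) (mem_filter.1 (hsub (mem_filter.2 ⟨mem_univ k, hjk⟩))).2⟩
  intro j k hjk
  by_contra hne
  rcases (hf.ne hne).lt_or_gt with h | h
  · exact (hlt j k h).ne' hjk
  · exact (hlt k j h).ne hjk

theorem Set.ncard_range_eq_of_eq_iff {α β γ : Type*} {f : α → β} {g : α → γ}
    (h : ∀ a b, f a = f b ↔ g a = g b) : (range f).ncard = (range g).ncard :=
  Set.ncard_congr' ((Setoid.quotientKerEquivRange f).symm.trans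
    ((Quotient.congrRight h).trans (Setoid.quotientKerEquivRange g)))

namespace Sturmian

variable (σ : ℝ) (n : ℕ)

def orderTypeAt (x : ℝ) : Fin n → Fin n → Prop :=
  fun k l => Int.fract (x + (k : ℕ) * σ) < Int.fract (x + (l : ℕ) * σ)

noncomputable def wrapSet (x : ℝ) : Finset (Fin n) :=
  {k | 1 ≤ Int.fract x + Int.fract ((k : ℕ) * σ)}

variable {σ n}

theorem fract_add_mul_eq (x : ℝ) (k : Fin n) :
    Int.fract (x + (k : ℕ) * σ) =
      Int.fract x + Int.fract ((k : ℕ) * σ) - if k ∈ wrapSet σ n x then 1 else 0 := by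
  simp only [Int.fract_add_eq_ite, wrapSet, mem_filter, mem_univ, true_and]

theorem mem_wrapSet_iff [NeZero n] (x : ℝ) (k : Fin n) :
    k ∈ wrapSet σ n x ↔ orderTypeAt σ n x k 0 := by
  have h0 := Int.fract_nonneg ((k : ℕ) * σ)
  have h1 := Int.fract_lt_one ((k : ℕ) * σ)
  simp only [orderTypeAt, fract_add_mul_eq x k, Fin.val_zero, Nat.cast_zero, zero_mul, add_zero]
  split_ifs with hk
  · exact iff_of_true hk (by linarith)
  · exact iff_of_false hk (by linarith)

theorem orderTypeAt_eq_iff [NeZero n] (x y : ℝ) :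
    orderTypeAt σ n x = orderTypeAt σ n y ↔ wrapSet σ n x = wrapSet σ n y := by
  refine ⟨fun h => Finset.ext fun k => by rw [mem_wrapSet_iff, mem_wrapSet_iff, h], fun h => ?_⟩
  funext k l
  simp only [orderTypeAt, fract_add_mul_eq, h, add_sub_assoc, add_lt_add_iff_left]

theorem wrapSet_mono {x y : ℝ} (hxy : Int.fract x ≤ Int.fract y) :
    wrapSet σ n x ⊆ wrapSet σ n y :=
  monotone_filter_right _ fun _ _ hk => hk.trans (by gcongr)

theorem wrapSet_eq_iff_card_eq (x y : ℝ) :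
    wrapSet σ n x = wrapSet σ n y ↔ #(wrapSet σ n x) = #(wrapSet σ n y) := by
  refine ⟨congrArg card, fun h => ?_⟩
  rcases le_total (Int.fract x) (Int.fract y) with hxy | hyx
  · exact eq_of_subset_of_card_le (wrapSet_mono hxy) h.ge
  · exact (eq_of_subset_of_card_le (wrapSet_mono hyx) h.le).symm

theorem card_wrapSet_lt [NeZero n] (x : ℝ) : #(wrapSet σ n x) < n := by
  have h0 : (0 : Fin n) ∉ wrapSet σ n x := by
    simp [wrapSet, Int.fract_lt_one]
  simpa using card_lt_univ_of_notMem h0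

theorem exists_wrapSet_eq (hσ : Irrational σ) (ρ : ℝ) (j : Fin n) :
    ∃ m : ℕ, wrapSet σ n (ρ + m * σ) =
      ({i | Int.fract ((j : ℕ) * σ) < Int.fract ((i : ℕ) * σ)} : Finset (Fin n)) := by
  have hj0 := Int.fract_nonneg ((j : ℕ) * σ)
  have hj1 := Int.fract_lt_one ((j : ℕ) * σ)
  obtain ⟨m, hm, hmin⟩ := hσ.exists_nat_fract_add_mul_just_below ρ
    (univ.image fun i : Fin n => 1 - Int.fract ((i : ℕ) * σ)) (b := 1 - Int.fract ((j : ℕ) * σ))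
    (by linarith) (by linarith)
  refine ⟨m, Finset.ext fun i => ?_⟩
  have hi := hmin (1 - Int.fract ((i : ℕ) * σ)) (mem_image_of_mem _ (mem_univ i))
  simp only [wrapSet, mem_filter, mem_univ, true_and]
  constructor
  · intro h
    by_contra! hij
    linarith
  · intro h
    linarith [hi (by linarith)]

theorem ncard_range_card_wrapSet [NeZero n] (hσ : Irrational σ) (ρ : ℝ) :
    (Set.range fun m : ℕ => #(wrapSet σ n (ρ + m * σ))).ncard = n := by
  set S := Set.range fun m : ℕ => #(wrapSet σ n (ρ + m * σ))
  have hS : S ⊆ range n := by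
    rintro _ ⟨m, rfl⟩
    exact mem_range.2 (card_wrapSet_lt _)
  let rank : Fin n → ℕ := fun j => #{i : Fin n | Int.fract ((j : ℕ) * σ) < Int.fract ((i : ℕ) * σ)}
  have hrank : Set.range rank ⊆ S := by
    rintro _ ⟨j, rfl⟩
    obtain ⟨m, hm⟩ := exists_wrapSet_eq hσ ρ j
    exact ⟨m, congrArg card hm⟩
  have hinj : Injective rank := injective_card_filter_lt_of_injective
    (hσ.injective_fract_natCast_mul.comp (Fin.val_injective (n := n)))
  refine le_antisymm (by simpa using Set.ncard_le_ncard hS) ?_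
  calc n = (Set.range rank).ncard := by simp [Set.ncard_range_of_injective hinj]
    _ ≤ S.ncard := Set.ncard_le_ncard hrank ((range n).finite_toSet.subset hS)

theorem permFactor_eq_orderTypeAt (ρ : ℝ) (m : ℕ) :
    permFactor (fun i j : ℕ => Int.fract (ρ + i * σ) < Int.fract (ρ + j * σ)) m n =
      orderTypeAt σ n (ρ + m * σ) := by
  have hshift : ∀ k : ℕ, ρ + ((m + k : ℕ) : ℝ) * σ = ρ + m * σ + k * σ := fun k => by
    push_cast; ring
  funext k l
  simp only [permFactor, orderTypeAt, hshift]

end Sturmian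

theorem stmt15_general (σ ρ : ℝ) (hirr : Irrational σ) (n : ℕ) (hn : 1 ≤ n) :
    permComplexity (fun i j : ℕ =>
      Int.fract (ρ + (i : ℝ) * σ) < Int.fract (ρ + (j : ℝ) * σ)) n = n := by
  have : NeZero n := ⟨by omega⟩
  have hfactors : {f | ∃ m, f = permFactor (fun i j : ℕ =>
      Int.fract (ρ + (i : ℝ) * σ) < Int.fract (ρ + (j : ℝ) * σ)) m n} =
      Set.range fun m : ℕ => Sturmian.orderTypeAt σ n (ρ + m * σ) :=
    Set.ext fun f => exists_congr fun m => by rw [eq_comm, Sturmian.permFactor_eq_orderTypeAt]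
  rw [permComplexity, hfactors, Set.ncard_range_eq_of_eq_iff fun _ _ =>
    (Sturmian.orderTypeAt_eq_iff _ _).trans (Sturmian.wrapSet_eq_iff_card_eq _ _),
    Sturmian.ncard_range_card_wrapSet hirr]

theorem stmt15 (σ ρ : ℝ) (hirr : Irrational σ) (h0 : 0 < σ) (h1 : σ < 1)
    (hρ0 : 0 ≤ ρ) (hρ1 : ρ < 1) (n : ℕ) (hn : 1 ≤ n) :
    permComplexity (fun i j : ℕ =>
      Int.fract (ρ + (i : ℝ) * σ) < Int.fract (ρ + (j : ℝ) * σ)) n = n :=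
  stmt15_general σ ρ hirr n hn
end

section
/- For the Sturmian permutation β_{σ,ρ} and the Sturmian word s = s_{σ,ρ}, and any indices i < j: β[i] ≺ β[j] if and only if the factor s[i..j−1] is light, i.e., contains exactly ⌊(j−i)σ⌋ ones; and β[i] ≻ β[j] if and only if s[i..j−1] is heavy, i.e., contains ⌈(j−i)σ⌉ ones. -/
open Filter

/-! Write `x = ρ + iσ` and `m = j - i`. Since `s[k] = ⌊ρ + (k+1)σ⌋ - ⌊ρ + kσ⌋`, the number of
ones in `s[i..j-1]` telescopes to `⌊x + mσ⌋ - ⌊x⌋`, which exceeds `⌊mσ⌋` by the integer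
`{x} + {mσ} - {x + mσ} ∈ {0, 1}`. As `mσ` is irrational, `{mσ} ∈ (0, 1)`, so this excess is `0`
exactly when `{x} < {x + mσ}` and `1` exactly when `{x + mσ} < {x}`. -/

namespace Int

variable {R : Type*} [CommRing R] [LinearOrder R] [FloorRing R] {a b : R}

theorem floor_add_sub_floor_sub_floor (a b : R) :
    ((⌊a + b⌋ - ⌊a⌋ - ⌊b⌋ : ℤ) : R) = fract a + fract b - fract (a + b) := by
  simp only [fract]; push_cast; abel

variable [IsStrictOrderedRing R]

theorem floor_add_sub_floor_eq_ite (a : R) (hb₀ : 0 ≤ b) (hb₁ : b ≤ 1) :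
    ⌊a + b⌋ - ⌊a⌋ = if 1 - b ≤ fract a then 1 else 0 := by
  have hsplit : a + b = (fract a + b) + ⌊a⌋ := by rw [← self_sub_floor]; abel
  rw [hsplit, floor_add_intCast, add_sub_cancel_right, floor_eq_iff]
  have ha₀ := fract_nonneg a
  have ha₁ := fract_lt_one a
  split_ifs <;> push_cast <;> constructor <;> linarith

theorem floor_add_sub_floor_eq_floor_iff (hb : b ∉ Set.range ((↑) : ℤ → R)) :
    ⌊a + b⌋ - ⌊a⌋ = ⌊b⌋ ↔ fract a < fract (a + b) := by
  have hd := floor_add_sub_floor_sub_floor a b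
  have hb₀ : 0 < fract b := (fract_nonneg b).lt_of_ne' (fract_ne_zero_iff.mpr hb)
  have hb₁ := fract_lt_one b
  have ha₀ := fract_nonneg a
  have hab₁ := fract_lt_one (a + b)
  constructor
  · intro h
    rw [show ⌊a + b⌋ - ⌊a⌋ - ⌊b⌋ = 0 by omega, cast_zero] at hd
    linarith
  · intro h
    have hlt : ((⌊a + b⌋ - ⌊a⌋ - ⌊b⌋ : ℤ) : R) < (1 : ℤ) := by rw [cast_one]; linarith
    have hgt : ((-1 : ℤ) : R) < (⌊a + b⌋ - ⌊a⌋ - ⌊b⌋ : ℤ) := by rw [cast_neg, cast_one]; linarith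
    rw [cast_lt] at hlt hgt
    omega

theorem floor_add_sub_floor_eq_ceil_iff (hb : b ∉ Set.range ((↑) : ℤ → R)) :
    ⌊a + b⌋ - ⌊a⌋ = ⌈b⌉ ↔ fract (a + b) < fract a := by
  have hd := floor_add_sub_floor_sub_floor a b
  have hb₀ : 0 < fract b := (fract_nonneg b).lt_of_ne' (fract_ne_zero_iff.mpr hb)
  have hb₁ := fract_lt_one b
  have ha₁ := fract_lt_one a
  have hab₀ := fract_nonneg (a + b)
  rw [(ceil_eq_floor_add_one_iff_notMem b).mpr hb]
  constructor
  · intro h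
    rw [show ⌊a + b⌋ - ⌊a⌋ - ⌊b⌋ = 1 by omega, cast_one] at hd
    linarith
  · intro h
    have hlt : ((⌊a + b⌋ - ⌊a⌋ - ⌊b⌋ : ℤ) : R) < (2 : ℤ) := by rw [cast_ofNat]; linarith
    have hgt : ((0 : ℤ) : R) < (⌊a + b⌋ - ⌊a⌋ - ⌊b⌋ : ℤ) := by rw [cast_zero]; linarith
    rw [cast_lt] at hlt hgt
    omega

end Int

theorem sturmianWord_eq_one_iff (σ ρ : ℝ) (k : ℕ) :
    sturmianWord σ ρ k = 1 ↔ 1 - σ ≤ Int.fract (ρ + k * σ) := by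
  simp [sturmianWord]

theorem card_filter_sturmianWord_eq_one {σ : ℝ} (h₀ : 0 ≤ σ) (h₁ : σ ≤ 1) (ρ : ℝ) (i m : ℕ) :
    (((Finset.range m).filter fun k => sturmianWord σ ρ (i + k) = 1).card : ℤ)
      = ⌊ρ + ↑(i + m) * σ⌋ - ⌊ρ + ↑i * σ⌋ := by
  have htelescope := Finset.sum_range_sub (fun n => ⌊ρ + ↑(i + n) * σ⌋) m
  simp only [add_zero] at htelescope
  rw [Finset.card_filter, Nat.cast_sum, ← htelescope]
  refine Finset.sum_congr rfl fun k _ => ?_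
  have hstep : ρ + ↑(i + (k + 1)) * σ = (ρ + ↑(i + k) * σ) + σ := by push_cast; ring
  rw [hstep, Int.floor_add_sub_floor_eq_ite _ h₀ h₁]
  simp only [sturmianWord_eq_one_iff]
  split_ifs <;> rfl

theorem stmt16_general (σ ρ : ℝ) (hirr : Irrational σ) (h0 : 0 < σ) (h1 : σ < 1)
    (i j : ℕ) (hij : i < j) :
    (Int.fract (ρ + (i : ℝ) * σ) < Int.fract (ρ + (j : ℝ) * σ) ↔
      ((((Finset.range (j - i)).filter fun k => sturmianWord σ ρ (i + k) = 1).card : ℤ)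
        = ⌊((j - i : ℕ) : ℝ) * σ⌋)) ∧
    (Int.fract (ρ + (j : ℝ) * σ) < Int.fract (ρ + (i : ℝ) * σ) ↔
      ((((Finset.range (j - i)).filter fun k => sturmianWord σ ρ (i + k) = 1).card : ℤ)
        = ⌈((j - i : ℕ) : ℝ) * σ⌉)) := by
  have hlen : ((j - i : ℕ) : ℝ) * σ ∉ Set.range ((↑) : ℤ → ℝ) := by
    rintro ⟨z, hz⟩
    exact (hirr.natCast_mul (Nat.sub_pos_of_lt hij).ne').ne_int z hz.symm
  have hj : ρ + (j : ℝ) * σ = ρ + i * σ + ((j - i : ℕ) : ℝ) * σ := by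
    push_cast [Nat.cast_sub hij.le]; ring
  rw [card_filter_sturmianWord_eq_one h0.le h1.le, Nat.add_sub_cancel' hij.le, hj]
  exact ⟨(Int.floor_add_sub_floor_eq_floor_iff hlen).symm,
    (Int.floor_add_sub_floor_eq_ceil_iff hlen).symm⟩

theorem stmt16 (σ ρ : ℝ) (hirr : Irrational σ) (h0 : 0 < σ) (h1 : σ < 1)
    (hρ0 : 0 ≤ ρ) (hρ1 : ρ < 1) (i j : ℕ) (hij : i < j) :
    (Int.fract (ρ + (i : ℝ) * σ) < Int.fract (ρ + (j : ℝ) * σ) ↔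
      ((((Finset.range (j - i)).filter fun k => sturmianWord σ ρ (i + k) = 1).card : ℤ)
        = ⌊((j - i : ℕ) : ℝ) * σ⌋)) ∧
    (Int.fract (ρ + (j : ℝ) * σ) < Int.fract (ρ + (i : ℝ) * σ) ↔
      ((((Finset.range (j - i)).filter fun k => sturmianWord σ ρ (i + k) = 1).card : ℤ)
        = ⌈((j - i : ℕ) : ℝ) * σ⌉)) :=
  stmt16_general σ ρ hirr h0 h1 i j hij
end

section
/- Let α and β be infinite permutations whose underlying word is the same Sturmian word s, and suppose every factor of s of length at most n−1 determines the same factor of α as of β (possible since both have complexity equal to length + 1 of the underlying factor). If v is a factor of s of length n whose associated factors α^v and β^v differ, then they differ only in the relation between their first and last elements. -/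
open Filter

/-! Any two positions of a window of length `n + 1` other than its first and last lie together
in its prefix or in its suffix of length `n`. Each of these is the order type above a factor of
`s` of length `n - 1`, and on those α and β agree by hypothesis. -/

lemma factorAt_eq_factorAt_iff {w w' : ℕ → ℕ} {m m' p : ℕ} :
    factorAt w m p = factorAt w' m' p ↔ ∀ k < p, w (m + k) = w' (m' + k) := by
  simp [factorAt, List.ext_getElem_iff]

lemma factorAt_add_eq_of_eq {w w' : ℕ → ℕ} {m m' d p q : ℕ}
    (h : factorAt w m q = factorAt w' m' q) (hdp : d + p ≤ q) :
    factorAt w (m + d) p = factorAt w' (m' + d) p := by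
  rw [factorAt_eq_factorAt_iff] at h ⊢
  intro k hk
  simpa only [add_assoc] using h (d + k) (by omega)

lemma iff_of_permFactor_add_eq {α β : ℕ → ℕ → Prop} {i j d p k l : ℕ}
    (h : permFactor α (i + d) p = permFactor β (j + d) p)
    (hk : d ≤ k ∧ k < d + p) (hl : d ≤ l ∧ l < d + p) :
    α (i + k) (i + l) ↔ β (j + k) (j + l) := by
  have hkl := congrFun (congrFun h ⟨k - d, by omega⟩) ⟨l - d, by omega⟩
  simp only [permFactor] at hkl
  rw [show i + d + (k - d) = i + k by omega, show i + d + (l - d) = i + l by omega,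
    show j + d + (k - d) = j + k by omega, show j + d + (l - d) = j + l by omega] at hkl
  exact iff_of_eq hkl

lemma exists_window_of_ne_ends {n : ℕ} {k l : Fin (n + 1)}
    (h : ¬ ((k = 0 ∧ l = Fin.last n) ∨ (k = Fin.last n ∧ l = 0))) :
    ∃ d ≤ 1, (d ≤ (k : ℕ) ∧ (k : ℕ) < d + n) ∧ (d ≤ (l : ℕ) ∧ (l : ℕ) < d + n) := by
  simp only [Fin.ext_iff, Fin.val_zero, Fin.val_last] at h
  have := k.isLt
  have := l.isLt
  by_cases hkl : (k : ℕ) < n ∧ (l : ℕ) < n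
  · exact ⟨0, by omega, by omega, by omega⟩
  · exact ⟨1, le_rfl, by omega, by omega⟩

theorem stmt17_general (α β : ℕ → ℕ → Prop)
    (n : ℕ) (hn : 1 ≤ n)
    (hagree : ∀ m : ℕ, m < n → ∀ i j : ℕ,
      factorAt (underlying α) i m = factorAt (underlying β) j m →
        permFactor α i (m + 1) = permFactor β j (m + 1))
    (i j : ℕ)
    (hv : factorAt (underlying α) i n = factorAt (underlying β) j n) :
    ∀ k l : Fin (n + 1),
      ¬ ((k = 0 ∧ l = Fin.last n) ∨ (k = Fin.last n ∧ l = 0)) →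
        (permFactor α i (n + 1) k l ↔ permFactor β j (n + 1) k l) := by
  intro k l hkl
  obtain ⟨d, hd, hk, hl⟩ := exists_window_of_ne_ends hkl
  have hfactor := hagree (n - 1) (by omega) (i + d) (j + d)
    (factorAt_add_eq_of_eq hv (by omega))
  rw [Nat.sub_add_cancel hn] at hfactor
  exact iff_of_permFactor_add_eq hfactor hk hl

theorem stmt17 (α β : ℕ → ℕ → Prop) [IsStrictTotalOrder ℕ α] [IsStrictTotalOrder ℕ β]
    (n : ℕ) (hn : 1 ≤ n)
    (hagree : ∀ m : ℕ, m < n → ∀ i j : ℕ,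
      factorAt (underlying α) i m = factorAt (underlying β) j m →
        permFactor α i (m + 1) = permFactor β j (m + 1))
    (i j : ℕ)
    (hv : factorAt (underlying α) i n = factorAt (underlying β) j n)
    (hne : permFactor α i (n + 1) ≠ permFactor β j (n + 1)) :
    ∀ k l : Fin (n + 1),
      ¬ ((k = 0 ∧ l = Fin.last n) ∨ (k = Fin.last n ∧ l = 0)) →
        (permFactor α i (n + 1) k l ↔ permFactor β j (n + 1) k l) :=
  stmt17_general α β n hn hagree i j hv
end

section
/- Let β = β_{σ,ρ} and let v be a factor of s_{σ,ρ} of length n occurring at position giving canonical representative values ({τ}, {τ+σ}, …, {τ+nσ}). If the order relation between the first and last element of β^v can be reversed while preserving all other pairwise relations (yielding a valid distinct permutation pattern), then all numbers {τ+iσ} for 0 < i < n lie outside the open interval with endpoints {τ} and {τ+nσ}. -/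
open Filter

/-! If `b i` lay strictly between `b 0` and `b n`, the order relations of `c 0` and `c n` with
`c i` would force `c 0 < c n ↔ b 0 < b n` by transitivity, so the relation between the
endpoints could not be reversed. -/

theorem lt_iff_lt_of_mem_Ioo_min_max {α β : Type*} [LinearOrder α] [LinearOrder β]
    {a₀ a₁ a₂ : α} {b₀ b₁ b₂ : β} (h₀₁ : a₀ < a₁ ↔ b₀ < b₁) (h₁₂ : a₁ < a₂ ↔ b₁ < b₂)
    (ha₀₁ : a₀ ≠ a₁) (ha₁₂ : a₁ ≠ a₂) (hb : b₁ ∈ Set.Ioo (min b₀ b₂) (max b₀ b₂)) :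
    a₀ < a₂ ↔ b₀ < b₂ := by
  obtain ⟨hlo, hhi⟩ := hb
  rcases le_total b₀ b₂ with hb₀₂ | hb₂₀
  · rw [min_eq_left hb₀₂] at hlo
    rw [max_eq_right hb₀₂] at hhi
    exact iff_of_true ((h₀₁.mpr hlo).trans (h₁₂.mpr hhi)) (hlo.trans hhi)
  · rw [min_eq_right hb₂₀] at hlo
    rw [max_eq_left hb₂₀] at hhi
    have ha₁₀ : a₁ < a₀ := (not_lt.mp fun h => hhi.not_gt (h₀₁.mp h)).lt_of_ne ha₀₁.symm
    have ha₂₁ : a₂ < a₁ := (not_lt.mp fun h => hlo.not_gt (h₁₂.mp h)).lt_of_ne ha₁₂.symm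
    exact iff_of_false (ha₂₁.trans ha₁₀).not_gt (hlo.trans hhi).not_gt

theorem stmt18_general (n : ℕ) (b : ℕ → ℝ)
    (hrev : ∃ c : Fin (n + 1) → ℝ, Function.Injective c ∧
      (∀ k l : Fin (n + 1),
        ¬ ((k = 0 ∧ l = Fin.last n) ∨ (k = Fin.last n ∧ l = 0)) →
          (c k < c l ↔ b (k : ℕ) < b (l : ℕ))) ∧
      (c 0 < c (Fin.last n) ↔ ¬ b 0 < b n)) :
    ∀ i : ℕ, 0 < i → i < n →
      b i ∉ Set.Ioo (min (b 0) (b n)) (max (b 0) (b n)) := by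
  intro i hi₀ hin hmem
  obtain ⟨c, hc_inj, hc, hflip⟩ := hrev
  let k : Fin (n + 1) := ⟨i, by omega⟩
  have hk₀ : k ≠ 0 := Fin.ne_of_val_ne hi₀.ne'
  have hkn : k ≠ Fin.last n := Fin.ne_of_val_ne hin.ne
  have h₀n : (0 : Fin (n + 1)) ≠ Fin.last n := Fin.ne_of_val_ne (by rw [Fin.val_zero, Fin.val_last]; omega)
  have hforced : c 0 < c (Fin.last n) ↔ b 0 < b n := by
    simpa using lt_iff_lt_of_mem_Ioo_min_max (hc 0 k (by simp [hkn, h₀n]))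
      (hc k (Fin.last n) (by simp [hk₀, h₀n.symm])) (hc_inj.ne hk₀.symm) (hc_inj.ne hkn) hmem
  exact iff_not_self (hforced.symm.trans hflip)

theorem stmt18 (σ ρ : ℝ) (hirr : Irrational σ) (h0 : 0 < σ) (h1 : σ < 1)
    (m n : ℕ) (hn : 1 ≤ n) (b : ℕ → ℝ)
    (hb : ∀ k : ℕ, b k = Int.fract (ρ + ((m + k : ℕ) : ℝ) * σ))
    (hrev : ∃ c : Fin (n + 1) → ℝ, Function.Injective c ∧
      (∀ k l : Fin (n + 1),
        ¬ ((k = 0 ∧ l = Fin.last n) ∨ (k = Fin.last n ∧ l = 0)) →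
          (c k < c l ↔ b (k : ℕ) < b (l : ℕ))) ∧
      (c 0 < c (Fin.last n) ↔ ¬ b 0 < b n)) :
    ∀ i : ℕ, 0 < i → i < n →
      b i ∉ Set.Ioo (min (b 0) (b n)) (max (b 0) (b n)) :=
  stmt18_general n b hrev
end
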